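/- arXiv:2104.06636 — 11 statements merged into one kernel-verified Lean document; each statement's English description precedes it below -/
import Mathlib

section
/- Let F = {S_1, S_2, …, S_m} be a finite family of finite nonempty sets, let u be an element not contained in any S_i, let E_i = S_i ∪ {u} for each i, let E_0 = E_1 ∪ … ∪ E_m, and let H be the acyclic hypergraph with hyperedge family {E_0, E_1, …, E_m}. Then F contains two distinct sets S_i and S_j with S_i ⊆ S_j if and only if there exists a join tree for H that contains the edge E_iE_j between two of the hyperedges E_1, …, E_m. -/
/-!
If `S_i ⊆ S_j`, take the star centred at `E_0` and move the leaf `E_i` so that it hangs from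
`E_j`: a vertex lying in `E_i` also lies in `E_j` and `E_0`, so each vertex still spans a subtree.
Conversely, deleting a tree edge `E_iE_j` leaves `E_0` in the component of at most one endpoint;
if it is not that of `E_i`, the subtree spanned by any `v ∈ E_i ∩ E_0` must use the edge, so
`E_i ∩ E_0 ⊆ E_j`, and as `S_i ⊆ E_0` and `u ∉ S_i` this gives `S_i ⊆ S_j`.
-/

open SimpleGraph

/-- `T` is a join tree for the hypergraph whose hyperedge family is `E` (indexed by `ι`):
`T` is a tree on the hyperedges and, for every vertex `v`, the hyperedges containing `v`
induce a connected (nonempty sets being preconnected) subgraph of `T`. -/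
def IsJoinTree {V ι : Type*} (E : ι → Finset V) (T : SimpleGraph ι) : Prop :=
  T.IsTree ∧ ∀ v : V, (T.induce {i | v ∈ E i}).Preconnected

/-- A hypergraph is acyclic if it admits a join tree. -/
def IsAcyclicHG {V ι : Type*} (E : ι → Finset V) : Prop :=
  ∃ T : SimpleGraph ι, IsJoinTree E T
/-- The hyperedge family built from the family `S` and the new vertex `u`:
`E_i = S_i ∪ {u}` (indexed by `some i`) and `E_0 = E_1 ∪ ⋯ ∪ E_m` (indexed by `none`). -/
def FamE {α : Type*} [DecidableEq α] {m : ℕ} (S : Fin m → Finset α) (u : α) :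
    Option (Fin m) → Finset α
  | none => Finset.univ.biUnion fun i => insert u (S i)
  | some i => insert u (S i)

namespace SimpleGraph

variable {V : Type*}

theorem mem_of_preconnected_induce_of_not_reachable {T : SimpleGraph V} {A : Set V}
    (hA : (T.induce A).Preconnected) {a b c : V} (ha : a ∈ A) (hc : c ∈ A)
    (hnr : ¬(T.deleteEdges {s(a, b)}).Reachable a c) : b ∈ A := by
  by_contra hb
  let f : T.induce A →g T.deleteEdges {s(a, b)} :=
    ⟨Subtype.val, fun {x y} hxy => by
      refine (deleteEdges_adj ..).mpr ⟨hxy, ?_⟩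
      rintro h
      rcases Sym2.eq_iff.mp (Set.mem_singleton_iff.mp h) with ⟨-, hyb⟩ | ⟨hxb, -⟩
      · exact hb (hyb ▸ y.2)
      · exact hb (hxb ▸ x.2)⟩
  exact hnr ((hA ⟨a, ha⟩ ⟨c, hc⟩).map f)

def reattachedStar (r a b : V) : SimpleGraph V :=
  (starGraph r).deleteEdges {s(a, r)} ⊔ edge a b

variable {r a b : V}

theorem reattachedStar_adj_center {x : V} (hxr : x ≠ r) (hxa : x ≠ a) :
    (reattachedStar r a b).Adj x r := by
  simp [reattachedStar, hxr, hxa]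

theorem reattachedStar_adj_of_ne (hab : a ≠ b) : (reattachedStar r a b).Adj a b := by
  simp [reattachedStar, edge_adj, hab]

theorem isAcyclic_reattachedStar (har : a ≠ r) (hab : a ≠ b) :
    (reattachedStar r a b).IsAcyclic := by
  have ha_isolated : ((starGraph r).deleteEdges {s(a, r)}).neighborSet a = ∅ := by
    ext x
    simp only [mem_neighborSet, deleteEdges_adj, starGraph_adj, Set.mem_singleton_iff,
      Set.mem_empty_iff_false, iff_false]
    grind
  exact ((isAcyclic_starGraph r).anti (deleteEdges_le _)).sup_edge_of_not_reachable
    (not_reachable_of_neighborSet_left_eq_empty hab ha_isolated)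

theorem reattachedStar_induce_preconnected (hab : a ≠ b) {A : Set V}
    (hr : A.Nonempty → r ∈ A) (hba : a ∈ A → b ∈ A) :
    ((reattachedStar r a b).induce A).Preconnected := by
  rintro ⟨x, hx⟩ ⟨y, hy⟩
  have hrA : r ∈ A := hr ⟨x, hx⟩
  have to_center : ∀ z (hz : z ∈ A), z ≠ a →
      ((reattachedStar r a b).induce A).Reachable ⟨z, hz⟩ ⟨r, hrA⟩ := by
    intro z hz hza
    by_cases hzr : z = r
    · subst hzr; rfl
    · exact Adj.reachable (reattachedStar_adj_center hzr hza)
  have reach : ∀ z (hz : z ∈ A),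
      ((reattachedStar r a b).induce A).Reachable ⟨z, hz⟩ ⟨r, hrA⟩ := by
    intro z hz
    by_cases hza : z = a
    · subst hza
      have hb : b ∈ A := hba hz
      have hzb : ((reattachedStar r z b).induce A).Adj ⟨z, hz⟩ ⟨b, hb⟩ :=
        reattachedStar_adj_of_ne hab
      exact hzb.reachable.trans (to_center b hb (Ne.symm hab))
    · exact to_center z hz hza
  exact (reach x hx).trans (reach y hy).symm

theorem isTree_reattachedStar (har : a ≠ r) (hab : a ≠ b) : (reattachedStar r a b).IsTree := by
  have : Nonempty V := ⟨r⟩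
  refine ⟨⟨?_⟩, isAcyclic_reattachedStar har hab⟩
  exact (induceUnivIso _).preconnected_iff.mp
    (reattachedStar_induce_preconnected hab (fun _ => trivial) (fun _ => trivial))

end SimpleGraph

section JoinTree

variable {V ι : Type*} [DecidableEq V] {E : ι → Finset V} {T : SimpleGraph ι}

theorem IsJoinTree.inter_subset_of_not_reachable (hT : IsJoinTree E T) {a b c : ι}
    (hnr : ¬(T.deleteEdges {s(a, b)}).Reachable a c) : E a ∩ E c ⊆ E b := by
  intro v hv
  rw [Finset.mem_inter] at hv
  exact mem_of_preconnected_induce_of_not_reachable (A := {i | v ∈ E i}) (hT.2 v) hv.1 hv.2 hnr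

/-- Deleting the tree edge `ab` separates `c` from `a` or from `b`. -/
theorem IsJoinTree.inter_subset_or_inter_subset_of_adj (hT : IsJoinTree E T) {a b : ι}
    (hab : T.Adj a b) (c : ι) : E a ∩ E c ⊆ E b ∨ E b ∩ E c ⊆ E a := by
  have hbridge : ¬(T.deleteEdges {s(a, b)}).Reachable a b :=
    isBridge_iff.mp (isAcyclic_iff_forall_adj_isBridge.mp hT.1.isAcyclic hab)
  by_cases hac : (T.deleteEdges {s(a, b)}).Reachable a c
  · right
    refine hT.inter_subset_of_not_reachable fun hbc => hbridge (hac.trans ?_)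
    rw [Sym2.eq_swap] at hbc
    exact hbc.symm
  · exact Or.inl (hT.inter_subset_of_not_reachable hac)

end JoinTree

section FamE

variable {α : Type*} [DecidableEq α] {m : ℕ} {S : Fin m → Finset α} {u : α}

theorem famE_subset_famE_none (o : Option (Fin m)) : FamE S u o ⊆ FamE S u none := by
  cases o with
  | none => exact subset_rfl
  | some i => exact Finset.subset_biUnion_of_mem (fun i => insert u (S i)) (Finset.mem_univ i)

theorem subset_of_famE_inter_subset {i j : Fin m} (hu : u ∉ S i)
    (h : FamE S u (some i) ∩ FamE S u none ⊆ FamE S u (some j)) : S i ⊆ S j := by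
  intro v hv
  have hvE : v ∈ FamE S u (some i) := Finset.mem_insert_of_mem hv
  rcases Finset.mem_insert.mp (h (Finset.mem_inter.mpr ⟨hvE, famE_subset_famE_none _ hvE⟩))
    with rfl | hvj
  · exact absurd hv hu
  · exact hvj

theorem isJoinTree_famE_reattachedStar {i j : Fin m} (hij : i ≠ j) (hsub : S i ⊆ S j) :
    IsJoinTree (FamE S u) (reattachedStar none (some i) (some j)) := by
  have hij' : (some i : Option (Fin m)) ≠ some j := by simpa using hij
  refine ⟨isTree_reattachedStar (Option.some_ne_none i) hij', fun v => ?_⟩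
  exact reattachedStar_induce_preconnected hij'
    (fun ⟨o, ho⟩ => famE_subset_famE_none o ho) (Finset.insert_subset_insert u hsub ·)

end FamE

theorem stmt1_general {α : Type*} [DecidableEq α] {m : ℕ}
    (S : Fin m → Finset α)
    (u : α) (hu : ∀ i, u ∉ S i) :
    (∃ i j : Fin m, i ≠ j ∧ S i ⊆ S j) ↔
      ∃ (i j : Fin m), i ≠ j ∧
        ∃ T : SimpleGraph (Option (Fin m)), IsJoinTree (FamE S u) T ∧ T.Adj (some i) (some j) := by
  constructor
  · rintro ⟨i, j, hij, hsub⟩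
    exact ⟨i, j, hij, _, isJoinTree_famE_reattachedStar hij hsub,
      reattachedStar_adj_of_ne (by simpa using hij)⟩
  · rintro ⟨i, j, hij, T, hT, hadj⟩
    rcases hT.inter_subset_or_inter_subset_of_adj hadj none with h | h
    · exact ⟨i, j, hij, subset_of_famE_inter_subset (hu i) h⟩
    · exact ⟨j, i, hij.symm, subset_of_famE_inter_subset (hu j) h⟩

/-- `F` contains two distinct sets `S_i ⊆ S_j` iff there is a join tree
for `H` containing an edge `E_iE_j` between two of the hyperedges `E_1, …, E_m`. -/
theorem stmt1 {α : Type*} [DecidableEq α] {m : ℕ} (hm : 0 < m)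
    (S : Fin m → Finset α) (hS : ∀ i, (S i).Nonempty)
    (u : α) (hu : ∀ i, u ∉ S i) :
    (∃ i j : Fin m, i ≠ j ∧ S i ⊆ S j) ↔
      ∃ (i j : Fin m), i ≠ j ∧
        ∃ T : SimpleGraph (Option (Fin m)), IsJoinTree (FamE S u) T ∧ T.Adj (some i) (some j) :=
  stmt1_general S u hu
end

section
/- Let F = {S_1, S_2, …, S_m} be a finite family of finite nonempty sets, let u be an element not contained in any S_i, let E_i = S_i ∪ {u} for each i, let E_0 = E_1 ∪ … ∪ E_m, and let H be the acyclic hypergraph with hyperedge family {E_0, E_1, …, E_m}. Let T be the star join tree in which each E_i (1 ≤ i ≤ m) is adjacent to E_0. Then F contains two distinct sets S_i and S_j with S_i ⊆ S_j if and only if T is not the unique join tree for H (i.e., there exists a join tree for H not equal to T). -/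
open SimpleGraph

/-!
Reattaching the leaf `E_i` of the star to `E_j` keeps it a join tree when `S_i ⊆ S_j`, since
every vertex of `E_i` then also lies in `E_j`. Conversely, a join tree other than the star has an
edge `E_i E_j`. If neither of `S_i`, `S_j` contained the other, a vertex of `S_i \ S_j` would link
`E_i` to `E_0` avoiding `E_j` and a vertex of `S_j \ S_i` would link `E_j` to `E_0` avoiding
`E_i`, so `E_i E_j` would lie on a cycle.
-/

namespace SimpleGraph

variable {V : Type*} {G : SimpleGraph V}

lemma Preconnected.exists_walk_support_subset {A : Set V} (h : (G.induce A).Preconnected)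
    {x y : V} (hx : x ∈ A) (hy : y ∈ A) : ∃ p : G.Walk x y, ∀ z ∈ p.support, z ∈ A := by
  obtain ⟨p⟩ := h ⟨x, hx⟩ ⟨y, hy⟩
  refine ⟨p.map (Embedding.induce A).toHom, fun z hz => ?_⟩
  obtain ⟨⟨z, hzA⟩, -, rfl⟩ := List.mem_map.mp (p.support_map (Embedding.induce A).toHom ▸ hz)
  exact hzA

lemma eq_fromRel_eq_none_of_connected {ι : Type*} {T : SimpleGraph (Option ι)}
    (hT : T.Connected) (h : ∀ i j, ¬T.Adj (some i) (some j)) :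
    T = fromRel fun a _ => a = none := by
  have hstar : ∀ k, T.Adj none (some k) := by
    intro k
    obtain ⟨_ | @⟨_, x, _, hadj, -⟩⟩ := hT.preconnected (some k) none
    cases x with
    | none => exact hadj.symm
    | some l => exact absurd hadj (h k l)
  ext a b
  cases a <;> cases b <;> simp [hstar, (hstar _).symm, h]

def parentGraph (p : V → V) : SimpleGraph V := fromRel fun a b => p a = b

variable {p : V → V} {r : V} {h : V → ℕ}

lemma parentGraph_adj_self {v : V} (hv : p v ≠ v) : (parentGraph p).Adj v (p v) :=
  (fromRel_adj _ _ _).mpr ⟨hv.symm, Or.inl rfl⟩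

lemma induce_parentGraph_preconnected (hp : ∀ v ≠ r, h (p v) < h v) {A : Set V}
    (hA : ∀ v ∈ A, p v ∈ A) : ((parentGraph p).induce A).Preconnected := by
  have key : ∀ x (hx : x ∈ A), ∃ hr : r ∈ A,
      ((parentGraph p).induce A).Reachable ⟨x, hx⟩ ⟨r, hr⟩ := by
    intro x
    induction x using (InvImage.wf h wellFounded_lt).induction with
    | _ x ih =>
      intro hx
      by_cases hxr : x = r
      · subst hxr
        exact ⟨hx, .rfl⟩
      obtain ⟨hr, hreach⟩ := ih (p x) (hp x hxr) (hA x hx)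
      have hpx : p x ≠ x := fun e => (hp x hxr).ne (by rw [e])
      exact ⟨hr, (induce_adj.mpr (parentGraph_adj_self hpx)).reachable.trans hreach⟩
  rintro ⟨x, hx⟩ ⟨y, hy⟩
  obtain ⟨hr, hxr⟩ := key x hx
  exact hxr.trans (key y hy).2.symm

lemma isTree_parentGraph [Finite V] (hr : p r = r) (hp : ∀ v ≠ r, h (p v) < h v) :
    (parentGraph p).IsTree := by
  have hpv : ∀ v ≠ r, p v ≠ v := fun v hv e => (hp v hv).ne (by rw [e])
  have hedges : (parentGraph p).edgeSet = Set.range fun v : {v // v ≠ r} => s(v.1, p v.1) := by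
    ext e
    refine ⟨fun he => ?_, ?_⟩
    · induction e using Sym2.ind with
      | _ a b =>
        obtain ⟨hab, rfl | rfl⟩ := (fromRel_adj (fun a b => p a = b) a b).mp he
        · exact ⟨⟨a, fun e => hab (by rw [e, hr])⟩, rfl⟩
        · exact ⟨⟨b, fun e => hab (by rw [e, hr])⟩, Sym2.eq_swap⟩
    · rintro ⟨⟨v, hv⟩, rfl⟩
      exact parentGraph_adj_self (hpv v hv)
  have hinj : Function.Injective fun v : {v // v ≠ r} => s(v.1, p v.1) := by
    rintro ⟨v, hv⟩ ⟨w, hw⟩ hvw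
    rcases Sym2.eq_iff.mp hvw with ⟨hvw, -⟩ | ⟨hvpw, hpvw⟩
    · exact Subtype.ext hvw
    · dsimp only at hvpw hpvw
      have hv' := hp v hv
      have hw' := hp w hw
      rw [hpvw] at hv'
      rw [← hvpw] at hw'
      omega
  rw [isTree_iff_connected_and_card]
  have : Nonempty V := ⟨r⟩
  refine ⟨Connected.mk ?_, ?_⟩
  · exact (induceUnivIso _).preconnected_iff.mp
      (induce_parentGraph_preconnected hp fun _ _ => Set.mem_univ _)
  · classical
    rw [hedges, Nat.card_range_of_injective hinj, ← Finite.card_option,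
      Nat.card_congr (Equiv.optionSubtypeNe r)]

end SimpleGraph

lemma IsJoinTree.subset_or_subset_of_adj {V ι : Type*} {E : ι → Finset V} {T : SimpleGraph ι}
    (hT : IsJoinTree E T) {a b c : ι} (hab : T.Adj a b) (hac : E a ⊆ E c)
    (hbc : E b ⊆ E c) : E a ⊆ E b ∨ E b ⊆ E a := by
  by_contra! hne
  obtain ⟨v, hva, hvb⟩ := Finset.not_subset.mp hne.1
  obtain ⟨w, hwb, hwa⟩ := Finset.not_subset.mp hne.2
  obtain ⟨p, hp⟩ := (hT.2 v).exists_walk_support_subset (y := c) hva (hac hva)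
  obtain ⟨q, hq⟩ := (hT.2 w).exists_walk_support_subset (y := b) (hbc hwb) hwb
  have hbridge := isBridge_iff_forall_walk_mem_edges.mp
    (isAcyclic_iff_forall_adj_isBridge.mp hT.1.isAcyclic hab) (p.append q)
  rw [Walk.edges_append, List.mem_append] at hbridge
  rcases hbridge with he | he
  · exact hvb (hp b (p.snd_mem_support_of_mem_edges he))
  · exact hwa (hq a (q.fst_mem_support_of_mem_edges he))

lemma FamE_subset_none {α : Type*} [DecidableEq α] {m : ℕ} (S : Fin m → Finset α) (u : α)
    (x : Option (Fin m)) : FamE S u x ⊆ FamE S u none := by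
  cases x with
  | none => exact subset_rfl
  | some i => exact Finset.subset_biUnion_of_mem (fun i => insert u (S i)) (Finset.mem_univ i)

section

variable {ι : Type*} [DecidableEq ι]

/-- The parent map of the star on `Option ι` with the leaf `some i` moved below `some j`. -/
def reattach (i j : ι) (x : Option ι) : Option ι :=
  if x = some i then some j else none

def reattachHeight (i : ι) : Option ι → ℕ
  | none => 0
  | some k => if k = i then 2 else 1

lemma reattachHeight_reattach_lt {i j : ι} (hij : i ≠ j) (x : Option ι) (hx : x ≠ none) :
    reattachHeight i (reattach i j x) < reattachHeight i x := by
  cases x with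
  | none => exact absurd rfl hx
  | some k =>
    by_cases hk : k = i
    · simp [reattach, reattachHeight, hk, hij.symm]
    · simp [reattach, reattachHeight, hk]

lemma isTree_reattach [Finite ι] {i j : ι} (hij : i ≠ j) : (parentGraph (reattach i j)).IsTree :=
  isTree_parentGraph (r := none) (by simp [reattach]) (reattachHeight_reattach_lt hij)

end

theorem stmt2_general {α : Type*} [DecidableEq α] {m : ℕ} (S : Fin m → Finset α) (u : α) (hu : ∀ i, u ∉ S i) :
    (∃ i j : Fin m, i ≠ j ∧ S i ⊆ S j) ↔
      ∃ T : SimpleGraph (Option (Fin m)), IsJoinTree (FamE S u) T ∧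
        T ≠ SimpleGraph.fromRel fun a _ => a = none := by
  constructor
  · rintro ⟨i, j, hij, hsub⟩
    have hreattach : reattach i j (some i) ≠ some i := by simp [reattach, hij.symm]
    refine ⟨parentGraph (reattach i j), ⟨isTree_reattach hij, fun v => ?_⟩, fun h => ?_⟩
    · refine induce_parentGraph_preconnected (r := none) (reattachHeight_reattach_lt hij) fun x hx => ?_
      by_cases hxi : x = some i
      · subst hxi
        simpa [reattach, FamE] using Finset.insert_subset_insert u hsub hx
      · simpa [reattach, hxi] using FamE_subset_none S u x hx
    · have hadj := parentGraph_adj_self hreattach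
      rw [h] at hadj
      simp [reattach] at hadj
  · rintro ⟨T, hT, hne⟩
    obtain ⟨i, j, hadj⟩ : ∃ i j, T.Adj (some i) (some j) := by
      by_contra! h
      exact hne (eq_fromRel_eq_none_of_connected hT.1.connected h)
    have hij : i ≠ j := fun e => hadj.ne (congrArg some e)
    rcases hT.subset_or_subset_of_adj hadj (FamE_subset_none S u _) (FamE_subset_none S u _)
      with h | h
    · exact ⟨i, j, hij, (Finset.insert_subset_insert_iff (hu i)).mp h⟩
    · exact ⟨j, i, hij.symm, (Finset.insert_subset_insert_iff (hu j)).mp h⟩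

/-- `F` contains two distinct sets `S_i ⊆ S_j` iff the star tree (in
which each `E_i`, `1 ≤ i ≤ m`, is adjacent to `E_0`) is not the unique join tree of `H`,
i.e. iff there exists a join tree for `H` different from the star tree. -/
theorem stmt2 {α : Type*} [DecidableEq α] {m : ℕ} (hm : 0 < m)
    (S : Fin m → Finset α) (hS : ∀ i, (S i).Nonempty)
    (u : α) (hu : ∀ i, u ∉ S i) :
    (∃ i j : Fin m, i ≠ j ∧ S i ⊆ S j) ↔
      ∃ T : SimpleGraph (Option (Fin m)), IsJoinTree (FamE S u) T ∧
        T ≠ SimpleGraph.fromRel fun a _ => a = none :=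
  stmt2_general S u hu
end

section
/- Let H = (V, ℰ) be an acyclic hypergraph and let E_i and E_j be two distinct hyperedges of H. Then H has a join tree containing the edge E_iE_j if and only if E_i ∩ E_j separates E_i \ E_j from E_j \ E_i in H. -/
/-!
Deleting the edge `ij` from a join tree leaves two sides, that of `i` and that of `j`. The
hyperedges containing a vertex outside `E i ∩ E j` form a subtree avoiding the edge `ij`, hence
lie on one side, so a path that avoids `E i ∩ E j` cannot get from `E i` to `E j`; connectedness
of the hypergraph rules out `E i ∩ E j = ∅` the same way.

Conversely, take the path from `i` to `j` in any join tree. Separation yields an edge `cd` of it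
whose hyperedges share only vertices of `E i ∩ E j`. Exchanging `cd` for `ij` gives a tree; it is
still a join tree, since the subtree of a vertex outside `E i ∩ E j` never used `cd`, while a
vertex of `E i ∩ E j` lies in every hyperedge of the path and so can go around through `ij`.
-/

open SimpleGraph

/-- A list of vertices forms a path in the hypergraph `E` if each two consecutive
vertices lie in a common hyperedge. -/
def FormsPath {V ι : Type*} (E : ι → Finset V) (p : List V) : Prop :=
  p.Chain' fun a b => ∃ i, a ∈ E i ∧ b ∈ E i

/-- `X` separates `Y` from `Z` in the hypergraph `E`: `X` is nonempty and every sequence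
of vertices forming a path in `E` from a vertex of `Y` to a vertex of `Z` contains a
vertex of `X`. -/
def Separates {V ι : Type*} (E : ι → Finset V) (X Y Z : Finset V) : Prop :=
  X.Nonempty ∧ ∀ p : List V, FormsPath E p →
    (∃ y ∈ Y, p.head? = some y) → (∃ z ∈ Z, p.getLast? = some z) →
    ∃ x ∈ X, x ∈ p
/-- The incidence graph of a hypergraph: the bipartite graph on vertices and hyperedges
where a vertex is adjacent to the hyperedges containing it. -/
def incidenceGraph {V ι : Type*} (E : ι → Finset V) : SimpleGraph (V ⊕ ι) where
  Adj a b :=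
    (∃ v i, a = Sum.inl v ∧ b = Sum.inr i ∧ v ∈ E i) ∨
    (∃ v i, a = Sum.inr i ∧ b = Sum.inl v ∧ v ∈ E i)
  symm := by
    constructor
    rintro a b (⟨v, i, rfl, rfl, h⟩ | ⟨v, i, rfl, rfl, h⟩)
    · exact Or.inr ⟨v, i, rfl, rfl, h⟩
    · exact Or.inl ⟨v, i, rfl, rfl, h⟩
  loopless := by
    constructor
    rintro a (⟨v, i, rfl, h, -⟩ | ⟨v, i, rfl, h, -⟩) <;> simp at h

namespace SimpleGraph

variable {α : Type*} {G G' T : SimpleGraph α}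

theorem induce_reachable_iff_exists_walk {s : Set α} {a b : s} :
    (G.induce s).Reachable a b ↔ ∃ w : G.Walk a b, ∀ x ∈ w.support, x ∈ s := by
  constructor
  · rintro ⟨w⟩
    refine ⟨w.map (Embedding.induce s).toHom, fun x hx => ?_⟩
    replace hx : x ∈ (w.map (Embedding.induce s).toHom).support := hx
    rw [Walk.support_map, List.mem_map] at hx
    obtain ⟨y, -, rfl⟩ := hx
    exact y.2
  · rintro ⟨w, hw⟩
    exact ⟨w.induce s hw⟩

theorem Preconnected.of_forall_adj_reachable (hG : G.Preconnected)
    (h : ∀ ⦃a b⦄, G.Adj a b → G'.Reachable a b) : G'.Preconnected := by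
  intro a b
  obtain ⟨w⟩ := hG a b
  induction w with
  | nil => rfl
  | cons hadj _ ih => exact (h hadj).trans ih

theorem IsAcyclic.not_reachable_deleteEdges (hT : T.IsAcyclic) {c d i j : α} (hcd : T.Adj c d)
    (hi : (T.deleteEdges {s(c, d)}).Reachable i c)
    (hj : (T.deleteEdges {s(c, d)}).Reachable d j) :
    ¬(T.deleteEdges {s(c, d)}).Reachable i j := fun hij =>
  isAcyclic_iff_forall_adj_isBridge.mp hT hcd (hi.symm.trans (hij.trans hj.symm))

theorem IsTree.deleteEdges_sup_edge (hT : T.IsTree) {c d i j : α} (hcd : T.Adj c d)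
    (hi : (T.deleteEdges {s(c, d)}).Reachable i c)
    (hj : (T.deleteEdges {s(c, d)}).Reachable d j) :
    (T.deleteEdges {s(c, d)} ⊔ edge i j).IsTree := by
  have hnij := hT.isAcyclic.not_reachable_deleteEdges hcd hi hj
  have hij : (T.deleteEdges {s(c, d)} ⊔ edge i j).Adj i j :=
    Or.inr ((edge_adj i j i j).mpr ⟨Or.inl ⟨rfl, rfl⟩, fun h => hnij (h ▸ .rfl)⟩)
  have := hT.connected.nonempty
  refine ⟨⟨hT.connected.preconnected.of_forall_adj_reachable fun a b hab => ?_⟩, ?_⟩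
  · by_cases he : s(a, b) = s(c, d)
    · have hcd' : (T.deleteEdges {s(c, d)} ⊔ edge i j).Reachable c d :=
        (hi.symm.mono le_sup_left).trans (hij.reachable.trans (hj.symm.mono le_sup_left))
      rcases Sym2.eq_iff.mp he with ⟨rfl, rfl⟩ | ⟨rfl, rfl⟩
      exacts [hcd', hcd'.symm]
    · exact Adj.reachable (Or.inl (deleteEdges_adj.mpr ⟨hab, he⟩))
  · exact (hT.isAcyclic.anti (deleteEdges_le _)).sup_edge_of_not_reachable hnij

end SimpleGraph

open SimpleGraph

section

variable {V ι : Type*} {E : ι → Finset V} {T : SimpleGraph ι}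

theorem reachable_of_reachable_incidenceGraph {G : SimpleGraph ι}
    (hE : ∀ v k l, v ∈ E k → v ∈ E l → G.Reachable k l) {a b : ι}
    (h : (incidenceGraph E).Reachable (.inr a) (.inr b)) : G.Reachable a b := by
  obtain ⟨w⟩ := h
  -- `Sum.elim (· ∈ E k) (· = k) x`: the node `x` is the hyperedge `k` or a vertex of `E k`.
  suffices ∀ {x y} (_ : (incidenceGraph E).Walk x y) (k : ι), Sum.elim (· ∈ E k) (· = k) x →
      ∃ l, Sum.elim (· ∈ E l) (· = l) y ∧ G.Reachable k l by
    obtain ⟨l, rfl, hl⟩ := this w a rfl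
    exact hl
  intro x y w
  induction w with
  | nil => exact fun k hk => ⟨k, hk, .rfl⟩
  | cons hadj _ ih =>
    intro k hk
    rcases hadj with ⟨v, m, rfl, rfl, hvm⟩ | ⟨v, m, rfl, rfl, hvm⟩
    · obtain ⟨l, hl, hml⟩ := ih m rfl
      exact ⟨l, hl, (hE v k m hk hvm).trans hml⟩
    · obtain rfl : m = k := hk
      exact ih m hvm

theorem FormsPath.reachable {G : SimpleGraph ι} :
    ∀ {p : List V} {a b : ι} {y z : V}, FormsPath E p →
      (∀ x ∈ p, ∀ k l, x ∈ E k → x ∈ E l → G.Reachable k l) →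
      p.head? = some y → p.getLast? = some z → y ∈ E a → z ∈ E b → G.Reachable a b
  | [], _, _, _, _, _, _, hy, _, _, _ => by simp at hy
  | [x], _, _, _, _, _, hpE, hy, hz, ha, hb => by
    simp only [List.head?_cons, List.getLast?_singleton, Option.some.injEq] at hy hz
    subst hy hz
    exact hpE x (by simp) _ _ ha hb
  | x :: w :: t, a, _, _, _, hp, hpE, hy, hz, ha, hb => by
    obtain ⟨⟨k, hxk, hwk⟩, hchain⟩ := List.isChain_cons_cons.mp hp
    obtain rfl : x = _ := Option.some.inj hy
    exact (hpE x (by simp) a k ha hxk).trans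
      (FormsPath.reachable hchain (fun x hx => hpE x (by simp [hx])) rfl hz hwk hb)

theorem exists_formsPath_of_forall_darts {G : SimpleGraph ι} {X : Finset V} :
    ∀ {a b : ι} (w : G.Walk a b), (∀ d ∈ w.darts, ∃ v ∉ X, v ∈ E d.fst ∧ v ∈ E d.snd) →
      ∀ {y z : V}, y ∈ E a → y ∉ X → z ∈ E b → z ∉ X →
      ∃ t, FormsPath E (y :: t) ∧ (y :: t).getLast? = some z ∧ ∀ x ∈ y :: t, x ∉ X
  | _, _, .nil, _, y, z, hy, hyX, hz, hzX =>
    ⟨[z], List.isChain_pair.mpr ⟨_, hy, hz⟩, rfl, by simp [hyX, hzX]⟩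
  | _, _, .cons h w, hw, y, z, hy, hyX, hz, hzX => by
    obtain ⟨v, hvX, hva, hvb⟩ := hw ⟨(_, _), h⟩ (by simp)
    obtain ⟨t, ht, hlast, htX⟩ :=
      exists_formsPath_of_forall_darts w (fun d hd => hw d (by simp [hd])) hvb hvX hz hzX
    refine ⟨v :: t, List.isChain_cons_cons.mpr ⟨⟨_, hy, hva⟩, ht⟩, ?_, ?_⟩
    · rwa [List.getLast?_cons_cons]
    · simpa [hyX] using htX

variable [DecidableEq V]

theorem IsJoinTree.reachable_deleteEdges_of_notMem_inter (hT : IsJoinTree E T) {i j k l : ι}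
    {v : V} (hv : v ∉ E i ∩ E j) (hk : v ∈ E k) (hl : v ∈ E l) :
    (T.deleteEdges {s(i, j)}).Reachable k l := by
  obtain ⟨W, hW⟩ := induce_reachable_iff_exists_walk.mp (hT.2 v ⟨k, hk⟩ ⟨l, hl⟩)
  refine reachable_deleteEdges_iff_exists_walk.mpr ⟨W, fun he => hv ?_⟩
  exact Finset.mem_inter.mpr
    ⟨hW _ (W.fst_mem_support_of_mem_edges he), hW _ (W.snd_mem_support_of_mem_edges he)⟩

theorem IsJoinTree.separates_of_adj (hT : IsJoinTree E T) (hconn : (incidenceGraph E).Connected)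
    {i j : ι} (hij : T.Adj i j) : Separates E (E i ∩ E j) (E i \ E j) (E j \ E i) := by
  have hbridge : ¬(T.deleteEdges {s(i, j)}).Reachable i j :=
    isAcyclic_iff_forall_adj_isBridge.mp hT.1.isAcyclic hij
  refine ⟨?_, fun p hp ⟨y, hy, hpy⟩ ⟨z, hz, hpz⟩ => ?_⟩
  · rw [Finset.nonempty_iff_ne_empty]
    intro hX
    refine hbridge (reachable_of_reachable_incidenceGraph (fun v k l => ?_)
      (hconn.preconnected (.inr i) (.inr j)))
    exact hT.reachable_deleteEdges_of_notMem_inter (hX ▸ Finset.notMem_empty v)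
  · by_contra! hpX
    exact hbridge (hp.reachable
      (fun x hx k l => hT.reachable_deleteEdges_of_notMem_inter fun hxX => hpX x hxX hx)
      hpy hpz (Finset.mem_sdiff.mp hy).1 (Finset.mem_sdiff.mp hz).1)

theorem IsJoinTree.inter_subset_of_mem_support (hT : IsJoinTree E T) {i j k : ι}
    {P : T.Walk i j} (hP : P.IsPath) (hk : k ∈ P.support) : E i ∩ E j ⊆ E k := by
  classical
  intro v hv
  rw [Finset.mem_inter] at hv
  obtain ⟨W, hW⟩ := induce_reachable_iff_exists_walk.mp (hT.2 v ⟨i, hv.1⟩ ⟨j, hv.2⟩)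
  have hPW : (⟨P, hP⟩ : T.Path i j) = W.toPath := (hT.1.isAcyclic.subsingleton_path i j).elim _ _
  exact hW k (W.support_toPath_subset_support (congrArg Subtype.val hPW ▸ hk))

theorem Separates.exists_dart_inter_subset {G : SimpleGraph ι} {i j : ι}
    (hsep : Separates E (E i ∩ E j) (E i \ E j) (E j \ E i)) (hij : i ≠ j) (P : G.Walk i j) :
    ∃ d ∈ P.darts, E d.fst ∩ E d.snd ⊆ E i ∩ E j := by
  have hP : ¬P.Nil := Walk.not_nil_of_ne hij
  by_cases hji : E i ⊆ E j
  · exact ⟨P.firstDart hP, P.firstDart_mem_darts hP,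
      Finset.inter_subset_left.trans (Finset.subset_inter subset_rfl hji)⟩
  by_cases hij' : E j ⊆ E i
  · exact ⟨P.lastDart hP, P.lastDart_mem_darts hP,
      Finset.inter_subset_right.trans (Finset.subset_inter hij' subset_rfl)⟩
  obtain ⟨y, hy⟩ := Finset.not_subset.mp hji
  obtain ⟨z, hz⟩ := Finset.not_subset.mp hij'
  -- Otherwise the vertices shared along `P` chain into a path from `y` to `z` avoiding `E i ∩ E j`.
  by_contra! hcross
  obtain ⟨t, ht, hlast, htX⟩ := exists_formsPath_of_forall_darts P
    (fun d hd => by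
      obtain ⟨v, hv, hvX⟩ := Finset.not_subset.mp (hcross d hd)
      exact ⟨v, hvX, Finset.mem_inter.mp hv⟩)
    hy.1 (fun h => hy.2 (Finset.mem_inter.mp h).2) hz.1 (fun h => hz.2 (Finset.mem_inter.mp h).1)
  obtain ⟨x, hxX, hx⟩ := hsep.2 _ ht ⟨y, Finset.mem_sdiff.mpr hy, rfl⟩
    ⟨z, Finset.mem_sdiff.mpr hz, hlast⟩
  exact htX x hx hxX

theorem IsJoinTree.deleteEdges_sup_edge (hT : IsJoinTree E T) {i j c d : ι} (hcd : T.Adj c d)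
    (ru : T.Walk i c) (rv : T.Walk d j) (hP : ((ru.append hcd.toWalk).append rv).IsPath)
    (hE : E c ∩ E d ⊆ E i ∩ E j) : IsJoinTree E (T.deleteEdges {s(c, d)} ⊔ edge i j) := by
  have hnodup := hP.edges_nodup
  simp only [Walk.edges_append, Adj.edges_toWalk, List.nodup_append, List.mem_append,
    List.mem_singleton] at hnodup
  have hru : s(c, d) ∉ ru.edges := fun h => hnodup.1.2.2 _ h _ rfl rfl
  have hrv : s(c, d) ∉ rv.edges := fun h => hnodup.2.2 _ (Or.inr rfl) _ h rfl
  have hi := (ru.toDeleteEdge _ hru).reachable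
  have hj := (rv.toDeleteEdge _ hrv).reachable
  have hij : (T.deleteEdges {s(c, d)} ⊔ edge i j).Adj i j :=
    Or.inr ((edge_adj i j i j).mpr ⟨Or.inl ⟨rfl, rfl⟩,
      fun h => hT.1.isAcyclic.not_reachable_deleteEdges hcd hi hj (h ▸ .rfl)⟩)
  let W : (T.deleteEdges {s(c, d)} ⊔ edge i j).Walk c d :=
    ((ru.toDeleteEdge _ hru).mapLe le_sup_left).reverse.append
      (.cons hij ((rv.toDeleteEdge _ hrv).mapLe le_sup_left).reverse)
  refine ⟨hT.1.deleteEdges_sup_edge hcd hi hj, fun v => ?_⟩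
  refine (hT.2 v).of_forall_adj_reachable ?_
  rintro ⟨a, ha⟩ ⟨b, hb⟩ hab
  by_cases he : s(a, b) = s(c, d)
  · have hv : v ∈ E c ∩ E d := by
      rcases Sym2.eq_iff.mp he with ⟨rfl, rfl⟩ | ⟨rfl, rfl⟩
      exacts [Finset.mem_inter.mpr ⟨ha, hb⟩, Finset.mem_inter.mpr ⟨hb, ha⟩]
    have hW : ∀ x ∈ W.support, v ∈ E x := by
      intro x hx
      refine hT.inter_subset_of_mem_support hP ?_ (hE hv)
      have hx' : x ∈ ru.support ∨ x = i ∨ x ∈ rv.support := by simpa [W] using hx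
      rw [Walk.mem_support_append_iff, Walk.mem_support_append_iff]
      rcases hx' with hx | rfl | hx
      exacts [Or.inl (Or.inl hx), Or.inl (Or.inl ru.start_mem_support), Or.inr hx]
    rcases Sym2.eq_iff.mp he with ⟨rfl, rfl⟩ | ⟨rfl, rfl⟩
    exacts [⟨W.induce _ hW⟩, ⟨(W.induce _ hW).reverse⟩]
  · exact Adj.reachable (Or.inl (deleteEdges_adj.mpr ⟨hab, he⟩))

end

theorem stmt3_general {V ι : Type*} [DecidableEq V]
    (E : ι → Finset V)
    (hconn : (incidenceGraph E).Connected)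
    (hacyclic : IsAcyclicHG E)
    (i j : ι) (hij : i ≠ j) :
    (∃ T : SimpleGraph ι, IsJoinTree E T ∧ T.Adj i j) ↔
      Separates E (E i ∩ E j) (E i \ E j) (E j \ E i) := by
  refine ⟨fun ⟨T, hT, hadj⟩ => hT.separates_of_adj hconn hadj, fun hsep => ?_⟩
  obtain ⟨T, hT⟩ := hacyclic
  obtain ⟨P, hP⟩ := (hT.1.connected.preconnected i j).exists_isPath
  obtain ⟨d, hd, hdE⟩ := hsep.exists_dart_inter_subset hij P
  obtain ⟨ru, rv, rfl⟩ := (P.isSubwalk_toWalk_adj_iff_mem_darts).mpr hd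
  exact ⟨_, hT.deleteEdges_sup_edge d.adj ru rv hP hdE,
    Or.inr ((edge_adj i j i j).mpr ⟨Or.inl ⟨rfl, rfl⟩, hij⟩)⟩

/-- For two distinct hyperedges `E_i, E_j` of an acyclic hypergraph `H`
(whose incidence graph is, as always in the paper, connected): `H` has a join tree
containing the edge `E_iE_j` iff `E_i ∩ E_j` separates `E_i \ E_j` from `E_j \ E_i`. -/
theorem stmt3 {V ι : Type*} [Fintype V] [Fintype ι] [DecidableEq V]
    (E : ι → Finset V)
    (hne : ∀ i, (E i).Nonempty) (hcov : ∀ v, ∃ i, v ∈ E i)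
    (hconn : (incidenceGraph E).Connected)
    (hacyclic : IsAcyclicHG E)
    (i j : ι) (hij : i ≠ j) :
    (∃ T : SimpleGraph ι, IsJoinTree E T ∧ T.Adj i j) ↔
      Separates E (E i ∩ E j) (E i \ E j) (E j \ E i) :=
  stmt3_general E hconn hacyclic i j hij
end

section
/- Let H = (V, ℰ) be an acyclic hypergraph and let E_i and E_j be two distinct hyperedges of H. Then H has a join tree containing the edge E_iE_j if and only if every join tree T of H has an edge E_i'E_j' on the path from E_i to E_j in T such that E_i ∩ E_j = E_i' ∩ E_j'. -/
/-!
Deleting the edge `E_iE_j` from a join tree `T₀` separates `E_i` from `E_j`, so the path from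
`E_i` to `E_j` in any join tree `T` has an edge `E_aE_b` whose ends fall on different sides.
A vertex of `E_a ∩ E_b` spans a subtree of `T₀` meeting both sides, which therefore contains
`E_i` and `E_j`; a vertex of `E_i ∩ E_j` spans a subtree of `T` containing the whole path, so
it lies in `E_a` and `E_b`.

Conversely, if `E_aE_b` lies on the path from `E_i` to `E_j` in a join tree `T` and
`E_a ∩ E_b = E_i ∩ E_j`, exchanging `E_aE_b` for `E_iE_j` yields a tree (name the ends so that
`E_a` lies on the side of `E_i`). The only subtrees
it could disconnect belong to vertices `v ∈ E_a ∩ E_b ⊆ E_i ∩ E_j`; such a subtree contains the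
tree paths from `E_i` to `E_a` and from `E_b` to `E_j`, which avoid `E_aE_b`, and the new edge
joins them.
-/

open SimpleGraph

namespace SimpleGraph

variable {V : Type*} {G H : SimpleGraph V}

theorem Preconnected.of_adj_reachable (hG : G.Preconnected)
    (h : ∀ x y, G.Adj x y → H.Reachable x y) : H.Preconnected := fun u v =>
  (reachable_iff_reflTransGen u v).2 <|
    Relation.ReflTransGen.lift' id (fun x y hxy => (reachable_iff_reflTransGen x y).1 (h x y hxy))
      u v ((reachable_iff_reflTransGen u v).1 (hG u v))

theorem Walk.reachable_induce {S : Set V} {u v : V} (p : G.Walk u v)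
    (hp : ∀ z ∈ p.support, z ∈ S) (hu : u ∈ S) (hv : v ∈ S) :
    (G.induce S).Reachable ⟨u, hu⟩ ⟨v, hv⟩ :=
  (p.connected_induce_support.preconnected ⟨u, p.start_mem_support⟩ ⟨v, p.end_mem_support⟩).map
    (G.induceHomOfLE hp).toHom

theorem exists_walk_support_subset_of_preconnected_induce {S : Set V}
    (h : (G.induce S).Preconnected) {u v : V} (hu : u ∈ S) (hv : v ∈ S) :
    ∃ p : G.Walk u v, ∀ z ∈ p.support, z ∈ S := by
  obtain ⟨p⟩ := h ⟨u, hu⟩ ⟨v, hv⟩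
  refine ⟨p.map (Embedding.induce S).toHom, fun z hz => ?_⟩
  have hz' : z ∈ p.support.map (Embedding.induce S).toHom := (p.support_map _).symm ▸ hz
  obtain ⟨⟨z, hzS⟩, -, rfl⟩ := List.mem_map.1 hz'
  exact hzS

theorem Reachable.deleteEdges_of_induce {S : Set V} {a b : V} (hab : ¬(a ∈ S ∧ b ∈ S))
    {x y : S} (h : (G.induce S).Reachable x y) : (G.deleteEdges {s(a, b)}).Reachable x y :=
  h.map
    { toFun := Subtype.val
      map_rel' := fun {x y} hxy => by
        refine deleteEdges_adj.2 ⟨hxy, fun he => hab ?_⟩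
        rcases Sym2.eq_iff.1 (Set.mem_singleton_iff.1 he) with ⟨rfl, rfl⟩ | ⟨rfl, rfl⟩
        exacts [⟨x.2, y.2⟩, ⟨y.2, x.2⟩] }

theorem Walk.exists_mem_edges_not_reachable {u v : V} (p : G.Walk u v) (h : ¬H.Reachable u v) :
    ∃ a b, s(a, b) ∈ p.edges ∧ ¬H.Reachable a b := by
  obtain ⟨d, hd, hu, hv⟩ := p.exists_boundary_dart {z | H.Reachable u z} .rfl h
  exact ⟨d.fst, d.snd, p.edges_eq_map_darts ▸ List.mem_map_of_mem hd, fun hr => hv (hu.trans hr)⟩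

theorem IsAcyclic.not_reachable_deleteEdges_of_mem_edges (hG : G.IsAcyclic) {u v a b : V}
    {p : G.Walk u v} (hp : p.IsPath) (hab : s(a, b) ∈ p.edges) :
    ¬(G.deleteEdges {s(a, b)}).Reachable u v := by
  classical
  rw [reachable_deleteEdges_iff_exists_walk]
  rintro ⟨q, hq⟩
  have hqp : q.bypass = p :=
    congrArg Subtype.val ((hG.subsingleton_path u v).elim ⟨_, q.bypass_isPath⟩ ⟨p, hp⟩)
  exact hq (q.edges_bypass_subset_edges (hqp ▸ hab))

theorem Preconnected.reachable_or_reachable_deleteEdges (hG : G.Preconnected) (x a b : V) :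
    (G.deleteEdges {s(a, b)}).Reachable x a ∨ (G.deleteEdges {s(a, b)}).Reachable x b := by
  induction (reachable_iff_reflTransGen x a).1 (hG x a)
    using Relation.ReflTransGen.head_induction_on with
  | refl => exact .inl .rfl
  | @head x c hxc _ ih =>
    by_cases he : s(x, c) = s(a, b)
    · rcases Sym2.eq_iff.1 he with ⟨rfl, -⟩ | ⟨rfl, -⟩
      exacts [.inl .rfl, .inr .rfl]
    · have hadj : (G.deleteEdges {s(a, b)}).Adj x c := deleteEdges_adj.2 ⟨hxc, he⟩
      exact ih.imp hadj.reachable.trans hadj.reachable.trans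

theorem Preconnected.induce_of_deleteEdges_le {S : Set V} {a b : V}
    (hG : (G.induce S).Preconnected) (hle : G.deleteEdges {s(a, b)} ≤ H)
    (hab : ∀ (ha : a ∈ S) (hb : b ∈ S), (H.induce S).Reachable ⟨a, ha⟩ ⟨b, hb⟩) :
    (H.induce S).Preconnected := by
  refine hG.of_adj_reachable fun x y hxy => ?_
  by_cases he : s(x.1, y.1) = s(a, b)
  · rcases Sym2.eq_iff.1 he with ⟨hx, hy⟩ | ⟨hx, hy⟩
    · subst hx hy
      exact hab x.2 y.2
    · subst hx hy
      exact (hab y.2 x.2).symm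
  · exact Adj.reachable (hle (deleteEdges_adj.2 ⟨hxy, he⟩) : (H.induce S).Adj x y)

end SimpleGraph

section JoinTree

variable {V ι : Type*} {E : ι → Finset V} {T : SimpleGraph ι}

theorem IsJoinTree.inter_subset_of_mem_support_s4 [DecidableEq V] (hT : IsJoinTree E T)
    {x y z : ι} {p : T.Walk x y} (hp : p.IsPath) (hz : z ∈ p.support) : E x ∩ E y ⊆ E z := by
  classical
  intro v hv
  rw [Finset.mem_inter] at hv
  obtain ⟨q, hq⟩ := exists_walk_support_subset_of_preconnected_induce (hT.2 v) hv.1 hv.2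
  have hqp : q.bypass = p := (hT.1.existsUnique_path x y).unique q.bypass_isPath hp
  exact hq z (q.support_bypass_subset_support (hqp ▸ hz))

theorem IsJoinTree.reachable_induce_of_le (hT : IsJoinTree E T) {G : SimpleGraph ι}
    (hGT : G ≤ T) {v : V} {x y : ι} (hxy : G.Reachable x y) (hx : v ∈ E x) (hy : v ∈ E y) :
    (G.induce {k | v ∈ E k}).Reachable ⟨x, hx⟩ ⟨y, hy⟩ := by
  classical
  obtain ⟨q⟩ := hxy
  refine q.bypass.reachable_induce (fun z hz => ?_) hx hy
  have hsub := hT.inter_subset_of_mem_support_s4 (q.bypass_isPath.mapLe hGT)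
    (by rwa [Walk.support_mapLe_eq_support])
  exact hsub (Finset.mem_inter.2 ⟨hx, hy⟩)

theorem IsJoinTree.inter_subset_of_not_reachable_deleteEdges [DecidableEq V]
    (hT : IsJoinTree E T) {i j a b : ι} (h : ¬(T.deleteEdges {s(i, j)}).Reachable a b) :
    E a ∩ E b ⊆ E i ∩ E j := by
  intro v hv
  rw [Finset.mem_inter] at hv ⊢
  by_contra hij
  exact h ((hT.2 v ⟨a, hv.1⟩ ⟨b, hv.2⟩).deleteEdges_of_induce hij)

theorem IsJoinTree.deleteEdges_sup_edge_s4 [DecidableEq V] (hT : IsJoinTree E T) {a b i j : ι}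
    (hij : ¬(T.deleteEdges {s(a, b)}).Reachable i j)
    (hsub : E a ∩ E b ⊆ E i ∩ E j) : IsJoinTree E (T.deleteEdges {s(a, b)} ⊔ edge i j) := by
  wlog hor : (T.deleteEdges {s(a, b)}).Reachable i a ∧ (T.deleteEdges {s(a, b)}).Reachable j b
    generalizing a b
  · have hor' :
        (T.deleteEdges {s(b, a)}).Reachable i b ∧ (T.deleteEdges {s(b, a)}).Reachable j a := by
      rw [Sym2.eq_swap]
      have hR := hT.1.connected.preconnected.reachable_or_reachable_deleteEdges
      rcases hR i a b with hi | hi <;> rcases hR j a b with hj | hj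
      · exact absurd (hi.trans hj.symm) hij
      · exact absurd ⟨hi, hj⟩ hor
      · exact ⟨hi, hj⟩
      · exact absurd (hi.trans hj.symm) hij
    have key := this (by rwa [Sym2.eq_swap]) (by rwa [Finset.inter_comm]) hor'
    rwa [Sym2.eq_swap] at key
  obtain ⟨hia, hjb⟩ := hor
  set G := T.deleteEdges {s(a, b)}
  have hGT : G ≤ T := deleteEdges_le _
  have hGG' : G ≤ G ⊔ edge i j := le_sup_left
  have hadj : (G ⊔ edge i j).Adj i j :=
    Or.inr ((edge_adj ..).2 ⟨.inl ⟨rfl, rfl⟩, fun h => hij (h ▸ .rfl)⟩)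
  have hconn : (G ⊔ edge i j).Connected := by
    have hT' := (induceUnivIso T).preconnected_iff.2 hT.1.connected.preconnected
    have hab' : (G ⊔ edge i j).Reachable a b :=
      (hia.symm.mono hGG').trans (hadj.reachable.trans (hjb.mono hGG'))
    refine (connected_iff _).2 ⟨(induceUnivIso _).preconnected_iff.1
      (hT'.induce_of_deleteEdges_le hGG' fun _ _ => ?_), hT.1.connected.nonempty⟩
    exact hab'.map (induceUnivIso _).symm.toHom
  refine ⟨⟨hconn, (hT.1.isAcyclic.anti hGT).sup_edge_of_not_reachable hij⟩, fun v => ?_⟩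
  refine (hT.2 v).induce_of_deleteEdges_le hGG' fun ha hb => ?_
  obtain ⟨hi, hj⟩ := Finset.mem_inter.1 (hsub (Finset.mem_inter.2 ⟨ha, hb⟩))
  have hlift {x y} (h : (G.induce {k | v ∈ E k}).Reachable x y) :
      ((G ⊔ edge i j).induce {k | v ∈ E k}).Reachable x y :=
    h.map (induceHom (Hom.ofLE hGG') (Set.mapsTo_id _))
  exact (hlift (hT.reachable_induce_of_le hGT hia hi ha)).symm.trans <|
    (show ((G ⊔ edge i j).induce {k | v ∈ E k}).Adj ⟨i, hi⟩ ⟨j, hj⟩ from hadj).reachable.trans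
      (hlift (hT.reachable_induce_of_le hGT hjb hj hb))

end JoinTree

theorem stmt4_general {V ι : Type*} [DecidableEq V]
    (E : ι → Finset V)
    (hacyclic : IsAcyclicHG E)
    (i j : ι) (hij : i ≠ j) :
    (∃ T : SimpleGraph ι, IsJoinTree E T ∧ T.Adj i j) ↔
      ∀ T : SimpleGraph ι, IsJoinTree E T →
        ∀ p : T.Walk i j, p.IsPath →
          ∃ a b : ι, s(a, b) ∈ p.edges ∧ E a ∩ E b = E i ∩ E j := by
  constructor
  · rintro ⟨T₀, hT₀, hadj⟩ T hT p hp
    obtain ⟨a, b, hab, hnr⟩ :=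
      p.exists_mem_edges_not_reachable (isAcyclic_iff_forall_adj_isBridge.1 hT₀.1.isAcyclic hadj)
    refine ⟨a, b, hab, (hT₀.inter_subset_of_not_reachable_deleteEdges hnr).antisymm ?_⟩
    exact Finset.subset_inter
      (hT.inter_subset_of_mem_support_s4 hp (p.fst_mem_support_of_mem_edges hab))
      (hT.inter_subset_of_mem_support_s4 hp (p.snd_mem_support_of_mem_edges hab))
  · intro h
    obtain ⟨T, hT⟩ := hacyclic
    obtain ⟨p, hp, -⟩ := hT.1.existsUnique_path i j
    obtain ⟨a, b, hab, heq⟩ := h T hT p hp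
    refine ⟨_, hT.deleteEdges_sup_edge_s4
      (hT.1.isAcyclic.not_reachable_deleteEdges_of_mem_edges hp hab) heq.subset, ?_⟩
    exact Or.inr ((edge_adj ..).2 ⟨.inl ⟨rfl, rfl⟩, hij⟩)

/-- For two distinct hyperedges `E_i, E_j` of an acyclic hypergraph `H`:
`H` has a join tree containing the edge `E_iE_j` iff every join tree `T` of `H` has an
edge `E_i'E_j'` on the path from `E_i` to `E_j` in `T` with `E_i ∩ E_j = E_i' ∩ E_j'`. -/
theorem stmt4 {V ι : Type*} [Fintype V] [Fintype ι] [DecidableEq V]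
    (E : ι → Finset V)
    (hne : ∀ i, (E i).Nonempty) (hcov : ∀ v, ∃ i, v ∈ E i)
    (hacyclic : IsAcyclicHG E)
    (i j : ι) (hij : i ≠ j) :
    (∃ T : SimpleGraph ι, IsJoinTree E T ∧ T.Adj i j) ↔
      ∀ T : SimpleGraph ι, IsJoinTree E T →
        ∀ p : T.Walk i j, p.IsPath →
          ∃ a b : ι, s(a, b) ∈ p.edges ∧ E a ∩ E b = E i ∩ E j :=
  stmt4_general E hacyclic i j hij
end

section
/- Let H = (V, ℰ) be an acyclic hypergraph and let E_i and E_j be two distinct hyperedges of H. Then the following are equivalent: (a) every join tree T of H has an edge E_i'E_j' on the path from E_i to E_j in T such that E_i ∩ E_j = E_i' ∩ E_j'; (b) every join tree T of H has a separator S corresponding to an edge on the path P from E_i to E_j in T such that S ⊆ S_i and S ⊆ S_j, where S_i and S_j are the separators of the edges of P incident to E_i and to E_j, respectively. -/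
open SimpleGraph

/-- Every vertex common to the endpoints of a path in a join tree belongs to every
hyperedge on the path. -/
lemma join_path_mem {V ι : Type*} [DecidableEq ι] (E : ι → Finset V) {T : SimpleGraph ι}
    (hT : IsJoinTree E T) {i j : ι} (p : T.Walk i j) (hp : p.IsPath)
    {v : V} (hvi : v ∈ E i) (hvj : v ∈ E j) :
    ∀ k ∈ p.support, v ∈ E k := by
  obtain ⟨htree, hconn⟩ := hT
  obtain ⟨w⟩ := hconn v ⟨i, hvi⟩ ⟨j, hvj⟩
  let f : (T.induce {i | v ∈ E i}) →g T := ⟨Subtype.val, fun h => h⟩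
  have hsup : ∀ k ∈ (w.map f).support, v ∈ E k := by
    intro k hk
    rw [SimpleGraph.Walk.support_map, List.mem_map] at hk
    obtain ⟨⟨k', hk'⟩, _, rfl⟩ := hk
    exact hk'
  have hb : p = (w.map f).bypass :=
    (htree.existsUnique_path i j).unique hp (SimpleGraph.Walk.bypass_isPath _)
  intro k hk
  exact hsup k (SimpleGraph.Walk.support_bypass_subset _ (hb ▸ hk))

lemma exists_first_edge {ι : Type*} {T : SimpleGraph ι} {i j : ι}
    (p : T.Walk i j) (hij : i ≠ j) : ∃ a, s(i, a) ∈ p.edges := by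
  cases p with
  | nil => exact absurd rfl hij
  | cons h q =>
    rename_i b
    exact ⟨b, by simp⟩

lemma exists_last_edge {ι : Type*} {T : SimpleGraph ι} {i j : ι}
    (p : T.Walk i j) (hij : i ≠ j) : ∃ b, s(b, j) ∈ p.edges := by
  obtain ⟨b, hb⟩ := exists_first_edge p.reverse hij.symm
  rw [SimpleGraph.Walk.edges_reverse, List.mem_reverse, Sym2.eq_swap] at hb
  exact ⟨b, hb⟩

/-- For two distinct hyperedges `E_i, E_j` of an acyclic hypergraph `H`,
the following are equivalent:
(a) every join tree `T` of `H` has an edge `E_i'E_j'` on the path from `E_i` to `E_j`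
    with `E_i ∩ E_j = E_i' ∩ E_j'`;
(b) every join tree `T` of `H` has a separator `S` on the path `P` from `E_i` to `E_j`
    with `S ⊆ S_i` and `S ⊆ S_j`, where `S_i` and `S_j` are the separators of the edges
    of `P` incident to `E_i` and to `E_j` respectively. -/
theorem stmt5 {V ι : Type*} [Fintype V] [Fintype ι] [DecidableEq V]
    (E : ι → Finset V)
    (hne : ∀ i, (E i).Nonempty) (hcov : ∀ v, ∃ i, v ∈ E i)
    (hacyclic : IsAcyclicHG E)
    (i j : ι) (hij : i ≠ j) :
    (∀ T : SimpleGraph ι, IsJoinTree E T →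
        ∀ p : T.Walk i j, p.IsPath →
          ∃ a b : ι, s(a, b) ∈ p.edges ∧ E a ∩ E b = E i ∩ E j) ↔
      (∀ T : SimpleGraph ι, IsJoinTree E T →
        ∀ p : T.Walk i j, p.IsPath →
          ∀ a b : ι, s(i, a) ∈ p.edges → s(b, j) ∈ p.edges →
            ∃ c d : ι, s(c, d) ∈ p.edges ∧
              E c ∩ E d ⊆ E i ∩ E a ∧ E c ∩ E d ⊆ E b ∩ E j) := by
  classical
  constructor
  · intro ha T hT p hp a b hia hbj
    obtain ⟨c, d, hcd, heq⟩ := ha T hT p hp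
    refine ⟨c, d, hcd, ?_, ?_⟩
    · rw [heq]
      intro v hv
      simp only [Finset.mem_inter] at hv ⊢
      exact ⟨hv.1, join_path_mem E hT p hp hv.1 hv.2 a
        (p.snd_mem_support_of_mem_edges hia)⟩
    · rw [heq]
      intro v hv
      simp only [Finset.mem_inter] at hv ⊢
      exact ⟨join_path_mem E hT p hp hv.1 hv.2 b
        (p.fst_mem_support_of_mem_edges hbj), hv.2⟩
  · intro hb T hT p hp
    obtain ⟨a, hia⟩ := exists_first_edge p hij
    obtain ⟨b, hbj⟩ := exists_last_edge p hij
    obtain ⟨c, d, hcd, h1, h2⟩ := hb T hT p hp a b hia hbj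
    refine ⟨c, d, hcd, Finset.Subset.antisymm ?_ ?_⟩
    · intro v hv
      have h1' := h1 hv
      have h2' := h2 hv
      simp only [Finset.mem_inter] at h1' h2' ⊢
      exact ⟨h1'.1, h2'.2⟩
    · intro v hv
      simp only [Finset.mem_inter] at hv ⊢
      exact ⟨join_path_mem E hT p hp hv.1 hv.2 c (p.fst_mem_support_of_mem_edges hcd),
        join_path_mem E hT p hp hv.1 hv.2 d (p.snd_mem_support_of_mem_edges hcd)⟩
end

section
/- Let H = (V, ℰ) be a hypergraph with vertices ordered v_1, …, v_n and hyperedges ordered E_1, …, E_m, and let M be the corresponding n × m binary incidence matrix (M_{i,j} = 1 iff v_i ∈ E_j). Assume M is doubly lexically ordered and Γ-free. For hyperedges E_i and E_j, write E_i ⪯ E_j if the column of E_i is lexicographically smaller than or equal to the column of E_j. Let v be the vertex of E_i that is earliest in the row order. Then E_i ⊆ E_j if and only if E_i ⪯ E_j and v ∈ E_j. -/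
open SimpleGraph


/-- Column `j` of the incidence matrix (of the hypergraph `E` over vertices `Fin n`) is
lexicographically smaller than or equal to column `j'`, where within a column the
priority of the entries increases from top to bottom. -/
def ColLE {n m : ℕ} (E : Fin m → Finset (Fin n)) (j j' : Fin m) : Prop :=
  (∀ i, i ∈ E j ↔ i ∈ E j') ∨
    ∃ i : Fin n, i ∉ E j ∧ i ∈ E j' ∧ ∀ i', i < i' → (i' ∈ E j ↔ i' ∈ E j')

/-- Row `i` of the incidence matrix is lexicographically smaller than or equal to row
`i'`, where within a row the priority of the entries increases from left to right. -/
def RowLE {n m : ℕ} (E : Fin m → Finset (Fin n)) (i i' : Fin n) : Prop :=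
  (∀ j, i ∈ E j ↔ i' ∈ E j) ∨
    ∃ j : Fin m, i ∉ E j ∧ i' ∈ E j ∧ ∀ j', j < j' → (i ∈ E j' ↔ i' ∈ E j')

/-- Let the incidence matrix of the hypergraph `E` (rows `Fin n` =
vertices, columns `Fin m` = hyperedges, entry `1` iff `i ∈ E j`) be doubly lexically
ordered and Γ-free, and let `v` be the earliest (topmost) vertex of `E j₁`. Then
`E j₁ ⊆ E j₂` iff `E j₁ ⪯ E j₂` (columnwise lexicographic comparison) and `v ∈ E j₂`. -/
theorem stmt8 {n m : ℕ} (E : Fin m → Finset (Fin n))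
    (hne : ∀ j, (E j).Nonempty)
    (hGammaFree : ∀ (i i' : Fin n) (j j' : Fin m), i < i' → j < j' →
      i ∈ E j → i ∈ E j' → i' ∈ E j → i' ∈ E j')
    (hRows : ∀ i i' : Fin n, i ≤ i' → RowLE E i i')
    (hCols : ∀ j j' : Fin m, j ≤ j' → ColLE E j j')
    (j₁ j₂ : Fin m) :
    E j₁ ⊆ E j₂ ↔ ColLE E j₁ j₂ ∧ (E j₁).min' (hne j₁) ∈ E j₂ := by
  constructor
  · intro hsub
    refine ⟨?_, hsub ((E j₁).min'_mem (hne j₁))⟩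
    by_cases hall : ∀ i, i ∈ E j₁ ↔ i ∈ E j₂
    · exact Or.inl hall
    · push_neg at hall
      obtain ⟨i, hi⟩ := hall
      have hS : (E j₂ \ E j₁).Nonempty := by
        refine ⟨i, Finset.mem_sdiff.2 ?_⟩
        rcases hi with ⟨h1, h2⟩ | ⟨h1, h2⟩
        · exact absurd (hsub h1) h2
        · exact ⟨h2, h1⟩
      have hm := (E j₂ \ E j₁).max'_mem hS
      rw [Finset.mem_sdiff] at hm
      refine Or.inr ⟨(E j₂ \ E j₁).max' hS, hm.2, hm.1, fun i' hlt => ?_⟩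
      constructor
      · exact fun h => hsub h
      · intro h2
        by_contra h1
        exact absurd (Finset.le_max' _ _ (Finset.mem_sdiff.2 ⟨h2, h1⟩))
          (not_le.2 hlt)
  · rintro ⟨hcol, hv⟩
    rcases hcol with hall | ⟨i, hi1, hi2, hagree⟩
    · exact fun x hx => (hall x).1 hx
    · have hne12 : j₁ ≠ j₂ := by rintro rfl; exact hi1 hi2
      have hlt : j₁ < j₂ := by
        rcases lt_or_gt_of_ne hne12 with h | h
        · exact h
        · exfalso
          rcases hCols j₂ j₁ h.le with hall | ⟨k, hk1, hk2, hkagree⟩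
          · exact hi1 ((hall i).1 hi2)
          · rcases lt_trichotomy k i with hki | hki | hki
            · exact hi1 ((hkagree i hki).1 hi2)
            · exact hk1 (hki ▸ hi2)
            · exact hk1 ((hagree k hki).1 hk2)
      intro x hx
      rcases eq_or_lt_of_le ((E j₁).min'_le x hx) with heq | hvx
      · exact heq ▸ hv
      · exact hGammaFree _ x j₁ j₂ hvx hlt ((E j₁).min'_mem (hne j₁)) hv hx
end

section
/- Let H = (V, ℰ) be a β-acyclic hypergraph, let T be a join tree for H, and let S(H) be the separator hypergraph of H with respect to T. Then S(H) is β-acyclic. -/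
open SimpleGraph

/-- A hypergraph is β-acyclic if every (nonempty) subfamily of its hyperedges forms an
acyclic hypergraph. -/
def BetaAcyclic {V ι : Type*} (E : ι → Finset V) : Prop :=
  ∀ s : Set ι, s.Nonempty → IsAcyclicHG fun i : s => E i
/-- The separator associated to an edge `{a, b}` of a join tree: `E a ∩ E b`. -/
def sepOf {V ι : Type*} [DecidableEq V] (E : ι → Finset V) : Sym2 ι → Finset V :=
  Sym2.lift ⟨fun a b => E a ∩ E b, fun a b => Finset.inter_comm _ _⟩

/-!
Fix a nonempty set `σ` of edges of the join tree `T` and cut `T` along `σ`. Each resulting block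
`c` is left by some `σ`-edges, each towards a different hyperedge; these hyperedges form a
subfamily of `H`, so by β-acyclicity they carry a join tree `Tc c`. Transplant `Tc c` onto the
`σ`-edges leaving `c` and take the union over all blocks. The result is a tree on `σ`: blocks and
`σ`-edges form the tree obtained by contracting `T`, and each star of it has been replaced by a
tree on its leaves. It is a join tree for the separators because, if the `σ`-edge `{a, b}` leaves
`c` at `b` and `v` lies in `E b` and in some hyperedge of `c`, then running intersection in `T`
puts `v` into `E a`; so inside a block the separators containing `v` are exactly those whose far
end contains `v`.
-/

namespace SeparatorHypergraph

lemma mem_sepOf_iff {V ι : Type*} [DecidableEq V] {E : ι → Finset V} {v : V} {z : Sym2 ι} :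
    v ∈ sepOf E z ↔ ∀ i ∈ z, v ∈ E i := by
  induction z using Sym2.ind
  simp [sepOf]

lemma exists_walk_of_reachable_induce {V : Type*} {G : SimpleGraph V} {s : Set V} {a b : s}
    (h : (G.induce s).Reachable a b) : ∃ w : G.Walk a b, ∀ i ∈ w.support, i ∈ s := by
  obtain ⟨w⟩ := h
  refine ⟨w.map (Embedding.induce s).toHom, fun i hi => ?_⟩
  erw [Walk.support_map, List.mem_map] at hi
  obtain ⟨j, -, rfl⟩ := hi
  exact j.2

variable {ι : Type*} {T : SimpleGraph ι}

section Blocks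

variable (σ : Set T.edgeSet)

def cutGraph : SimpleGraph ι := T.deleteEdges (Subtype.val '' σ)

abbrev Block := (cutGraph σ).ConnectedComponent

def block (i : ι) : Block σ := (cutGraph σ).connectedComponentMk i

def Leaves (n : σ) (c : Block σ) (b : ι) : Prop :=
  ∃ a, (n : Sym2 ι) = s(a, b) ∧ block σ a = c

def Touches (n : σ) (c : Block σ) : Prop := ∃ b, Leaves σ n c b

def exits (c : Block σ) : Set ι := {b | ∃ n, Leaves σ n c b}

end Blocks

variable {σ : Set T.edgeSet}

lemma adj_of_coe_eq (n : σ) {a b : ι} (h : (n : Sym2 ι) = s(a, b)) : T.Adj a b := by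
  rw [← mem_edgeSet, ← h]
  exact n.1.2

lemma reachable_of_block_eq (n : σ) {a a' : ι} (h : block σ a = block σ a') :
    (T.deleteEdges {(n : Sym2 ι)}).Reachable a a' :=
  (ConnectedComponent.eq.mp h).mono
    (deleteEdges_anti (Set.singleton_subset_iff.mpr (Set.mem_image_of_mem Subtype.val n.2)))

lemma adj_deleteEdges_of_ne {n m : σ} (hnm : n ≠ m) {a b : ι} (h : (n : Sym2 ι) = s(a, b)) :
    (T.deleteEdges {(m : Sym2 ι)}).Adj a b := by
  refine deleteEdges_adj.mpr ⟨adj_of_coe_eq n h, fun hm => hnm ?_⟩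
  exact Subtype.val_injective (Subtype.val_injective (h.trans hm))

lemma reachable_deleteEdges_of_mem {n k : σ} (hnk : n ≠ k) {u u' : ι}
    (hu : u ∈ (n : Sym2 ι)) (hu' : u' ∈ (n : Sym2 ι)) :
    (T.deleteEdges {(k : Sym2 ι)}).Reachable u u' := by
  by_cases huu' : u = u'
  · exact huu' ▸ .refl u
  · exact (adj_deleteEdges_of_ne hnk ((Sym2.mem_and_mem_iff huu').mp ⟨hu, hu'⟩)).reachable

lemma not_reachable_deleteEdges (hT : T.IsAcyclic) (n : σ) {a b : ι}
    (h : (n : Sym2 ι) = s(a, b)) : ¬(T.deleteEdges {(n : Sym2 ι)}).Reachable a b := by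
  rw [h]
  exact isBridge_iff.mp (isAcyclic_iff_forall_adj_isBridge.mp hT (adj_of_coe_eq n h))

lemma block_ne (hT : T.IsAcyclic) (n : σ) {a b : ι} (h : (n : Sym2 ι) = s(a, b)) :
    block σ a ≠ block σ b :=
  fun hab => not_reachable_deleteEdges hT n h (reachable_of_block_eq n hab)

lemma Leaves.right_unique (hT : T.IsAcyclic) {n : σ} {c : Block σ} {b b' : ι}
    (h : Leaves σ n c b) (h' : Leaves σ n c b') : b = b' := by
  obtain ⟨a, ha, rfl⟩ := h
  obtain ⟨a', ha', hc⟩ := h'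
  rcases Sym2.eq_iff.mp (ha.symm.trans ha') with ⟨-, hb⟩ | ⟨-, hb⟩
  · exact hb
  · exact absurd (hc.symm.trans (congrArg (block σ) hb.symm)) (block_ne hT n ha)

lemma Leaves.left_unique (hT : T.IsAcyclic) {n m : σ} {c : Block σ} {b : ι}
    (h : Leaves σ n c b) (h' : Leaves σ m c b) : n = m := by
  by_contra hnm
  obtain ⟨a, ha, rfl⟩ := h
  obtain ⟨a', ha', hc⟩ := h'
  exact not_reachable_deleteEdges hT n ha
    ((reachable_of_block_eq n hc.symm).trans (adj_deleteEdges_of_ne (Ne.symm hnm) ha').reachable)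

lemma touches_iff {n : σ} {c : Block σ} {a b : ι} (h : (n : Sym2 ι) = s(a, b)) :
    Touches σ n c ↔ c = block σ a ∨ c = block σ b := by
  constructor
  · rintro ⟨b', a', h', rfl⟩
    rcases Sym2.eq_iff.mp (h.symm.trans h') with ⟨rfl, -⟩ | ⟨-, rfl⟩ <;> simp
  · rintro (rfl | rfl)
    · exact ⟨b, a, h, rfl⟩
    · exact ⟨a, b, h.trans Sym2.eq_swap, rfl⟩

lemma eq_of_touches (hT : T.IsAcyclic) {n m : σ} {c c' : Block σ} (hcc' : c ≠ c')
    (hn : Touches σ n c) (hm : Touches σ m c) (hn' : Touches σ n c') (hm' : Touches σ m c') :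
    n = m := by
  by_contra hnm
  obtain ⟨b, a, hab, rfl⟩ := hn
  obtain ⟨b', a', hab', haa'⟩ := hm
  have hb : c' = block σ b := (touches_iff hab).mp hn' |>.resolve_left hcc'.symm
  have hb' : c' = block σ b' := (touches_iff hab').mp hm' |>.resolve_left (haa' ▸ hcc'.symm)
  exact not_reachable_deleteEdges hT n hab
    (((reachable_of_block_eq n haa'.symm).trans
      (adj_deleteEdges_of_ne (Ne.symm hnm) hab').reachable).trans
      (reachable_of_block_eq n (hb'.symm.trans hb)))

lemma mem_of_leaves {V : Type*} {E : ι → Finset V} {v : V} (hT : T.IsAcyclic)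
    (hTv : (T.induce {i | v ∈ E i}).Preconnected) {n : σ} {a b α : ι}
    (hab : (n : Sym2 ι) = s(a, b)) (hα : block σ α = block σ a) (hvb : v ∈ E b)
    (hvα : v ∈ E α) : v ∈ E a := by
  obtain ⟨w, hw⟩ := exists_walk_of_reachable_induce (hTv ⟨b, hvb⟩ ⟨α, hvα⟩)
  by_contra hva
  have hwn : s(a, b) ∉ w.edges := fun h => hva (hw a (w.fst_mem_support_of_mem_edges h))
  have hba : (T.deleteEdges {(n : Sym2 ι)}).Reachable b a := by
    refine Reachable.trans ?_ (reachable_of_block_eq n hα)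
    rw [hab]
    exact reachable_deleteEdges_iff_exists_walk.mpr ⟨w, hwn⟩
  exact not_reachable_deleteEdges hT n hab hba.symm

lemma reachable_of_walk {κ : Type*} {G : SimpleGraph κ} (f : κ → σ)
    (hloc : ∀ c (p q : κ), Touches σ (f p) c → Touches σ (f q) c → G.Reachable p q)
    {x y : ι} (w : T.Walk x y) (hw : ∀ n : σ, (n : Sym2 ι) ∈ w.edges → n ∈ Set.range f)
    {p q : κ} (hp : Touches σ (f p) (block σ x)) (hq : Touches σ (f q) (block σ y)) :
    G.Reachable p q := by
  induction w generalizing p with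
  | nil => exact hloc _ p q hp hq
  | @cons x x' y hxx' w ih =>
    have hw' : ∀ n : σ, (n : Sym2 ι) ∈ w.edges → n ∈ Set.range f :=
      fun n hn => hw n (List.mem_cons_of_mem _ hn)
    by_cases hσ : s(x, x') ∈ Subtype.val '' σ
    · obtain ⟨n, hnσ, hn⟩ := hσ
      obtain ⟨k, hk⟩ := hw ⟨n, hnσ⟩ (by simp [hn])
      have hkn : ((f k : T.edgeSet) : Sym2 ι) = s(x, x') := by rw [hk]; exact hn
      exact (hloc _ p k hp ⟨x', x, hkn, rfl⟩).trans
        (ih hw' ⟨x, x', hkn.trans Sym2.eq_swap, rfl⟩ hq)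
    · have hxx'_block : block σ x = block σ x' :=
        ConnectedComponent.eq.mpr (deleteEdges_adj.mpr ⟨hxx', hσ⟩).reachable
      exact ih hw' (hxx'_block ▸ hp) hq

variable (σ) in
noncomputable def exitEdge (c : Block σ) (x : exits σ c) : σ := x.2.choose

lemma leaves_exitEdge (c : Block σ) (x : exits σ c) : Leaves σ (exitEdge σ c x) c x :=
  x.2.choose_spec

lemma exitEdge_eq (hT : T.IsAcyclic) {c : Block σ} {x : exits σ c} {n : σ}
    (h : Leaves σ n c x) : exitEdge σ c x = n :=
  (leaves_exitEdge c x).left_unique hT h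

lemma exitEdge_injective (hT : T.IsAcyclic) (c : Block σ) : Function.Injective (exitEdge σ c) :=
  fun x y hxy =>
    Subtype.ext ((leaves_exitEdge c x).right_unique hT (hxy ▸ leaves_exitEdge c y))

variable (σ) in
def glue (Tc : ∀ c : Block σ, SimpleGraph (exits σ c)) : SimpleGraph σ where
  Adj n m := n ≠ m ∧
    ∃ c, ∃ x y : exits σ c, Leaves σ n c x ∧ Leaves σ m c y ∧ (Tc c).Adj x y
  symm := ⟨fun _ _ ⟨hnm, c, x, y, hx, hy, hxy⟩ => ⟨hnm.symm, c, y, x, hy, hx, hxy.symm⟩⟩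
  loopless := ⟨fun _ h => h.1 rfl⟩

variable {Tc : ∀ c : Block σ, SimpleGraph (exits σ c)}

lemma Touches.exits_nonempty {n : σ} {c : Block σ} (h : Touches σ n c) : (exits σ c).Nonempty :=
  let ⟨b, hb⟩ := h
  ⟨b, n, hb⟩

lemma exists_touches_of_adj {n m : σ} (h : (glue σ Tc).Adj n m) :
    ∃ c, Touches σ n c ∧ Touches σ m c :=
  let ⟨_, c, _, _, hx, hy, _⟩ := h
  ⟨c, ⟨_, hx⟩, ⟨_, hy⟩⟩

variable (Tc) in
noncomputable def exitEdgeHom (hT : T.IsAcyclic) (c : Block σ) : Tc c →g glue σ Tc where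
  toFun := exitEdge σ c
  map_rel' hxy := ⟨fun h => hxy.ne (exitEdge_injective hT c h), c, _, _,
    leaves_exitEdge c _, leaves_exitEdge c _, hxy⟩

@[simp]
lemma exitEdgeHom_apply (hT : T.IsAcyclic) (c : Block σ) (x : exits σ c) :
    exitEdgeHom Tc hT c x = exitEdge σ c x :=
  rfl

lemma adj_of_glue_adj (hT : T.IsAcyclic) {n m : σ} {c : Block σ} {x y : exits σ c}
    (hx : Leaves σ n c x) (hy : Leaves σ m c y) (h : (glue σ Tc).Adj n m) : (Tc c).Adj x y := by
  obtain ⟨hnm, c', x', y', hx', hy', hxy'⟩ := h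
  obtain rfl : c' = c := by
    by_contra hc
    exact hnm (eq_of_touches hT hc ⟨_, hx'⟩ ⟨_, hy'⟩ ⟨_, hx⟩ ⟨_, hy⟩)
  obtain rfl : x' = x := Subtype.ext (hx'.right_unique hT hx)
  obtain rfl : y' = y := Subtype.ext (hy'.right_unique hT hy)
  exact hxy'

variable (Tc) in
noncomputable def localIso (hT : T.IsAcyclic) (c : Block σ) :
    Tc c ≃g (glue σ Tc).induce {n | Touches σ n c} where
  toEquiv := Equiv.ofBijective (fun x => ⟨exitEdge σ c x, _, leaves_exitEdge c x⟩)
    ⟨fun _ _ h => exitEdge_injective hT c (congrArg Subtype.val h),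
      fun ⟨n, b, hb⟩ => ⟨⟨b, n, hb⟩, Subtype.ext (exitEdge_eq hT hb)⟩⟩
  map_rel_iff' := ⟨adj_of_glue_adj hT (leaves_exitEdge c _) (leaves_exitEdge c _),
    (exitEdgeHom Tc hT c).map_adj⟩

lemma reachable_of_touches (hT : T.IsAcyclic) {c : Block σ} (hTc : (Tc c).Connected) {n m : σ}
    (hn : Touches σ n c) (hm : Touches σ m c) : (glue σ Tc).Reachable n m :=
  (((localIso Tc hT c).connected_iff.mp hTc).preconnected ⟨n, hn⟩ ⟨m, hm⟩).map
    (Embedding.induce _).toHom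

lemma reachable_induce_of_touches {V : Type*} [DecidableEq V] {E : ι → Finset V} {v : V}
    (hT : T.IsAcyclic) (hTv : (T.induce {i | v ∈ E i}).Preconnected) {c : Block σ}
    (hTc : ((Tc c).induce {x : exits σ c | v ∈ E x}).Preconnected) {n m : σ}
    (hn : Touches σ n c) (hm : Touches σ m c) (hvn : v ∈ sepOf E n) (hvm : v ∈ sepOf E m) :
    ((glue σ Tc).induce {g : σ | v ∈ sepOf E g}).Reachable ⟨n, hvn⟩ ⟨m, hvm⟩ := by
  obtain ⟨b, a, hab, rfl⟩ := hn
  obtain ⟨b', a', hab', ha'⟩ := hm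
  have hva : v ∈ E a := mem_sepOf_iff.mp hvn a (hab ▸ Sym2.mem_mk_left a b)
  have hvb : v ∈ E b := mem_sepOf_iff.mp hvn b (hab ▸ Sym2.mem_mk_right a b)
  have hvb' : v ∈ E b' := mem_sepOf_iff.mp hvm b' (hab' ▸ Sym2.mem_mk_right a' b')
  have hmaps : Set.MapsTo (exitEdgeHom Tc hT (block σ a)) {x | v ∈ E x}
      {g : σ | v ∈ sepOf E g} := by
    intro x hvx
    obtain ⟨a₀, ha₀, hblock⟩ := leaves_exitEdge (block σ a) x
    refine mem_sepOf_iff.mpr fun i hi => ?_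
    rw [exitEdgeHom_apply, ha₀, Sym2.mem_iff] at hi
    rcases hi with rfl | rfl
    · exact mem_of_leaves hT hTv ha₀ hblock.symm hvx hva
    · exact hvx
  have := (hTc ⟨⟨b, n, a, hab, rfl⟩, hvb⟩ ⟨⟨b', m, a', hab', ha'⟩, hvb'⟩).map
    (induceHom _ hmaps)
  convert this using 1 <;> refine Subtype.ext (exitEdge_eq hT ?_).symm
  · exact ⟨a, hab, rfl⟩
  · exact ⟨a', hab', ha'⟩

lemma reachable_deleteEdges_of_walk {k : σ} {n m : σ} (W : (glue σ Tc).Walk n m)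
    (hkW : k ∉ W.support) {u u' : ι} (hu : u ∈ (n : Sym2 ι)) (hu' : u' ∈ (m : Sym2 ι)) :
    (T.deleteEdges {(k : Sym2 ι)}).Reachable u u' := by
  induction W generalizing u with
  | nil =>
    refine reachable_deleteEdges_of_mem ?_ hu hu'
    rintro rfl
    exact hkW (Walk.start_mem_support _)
  | @cons n n₁ m h W ih =>
    rw [Walk.support_cons, List.mem_cons, not_or] at hkW
    obtain ⟨_, c, _, _, ⟨a, ha, hac⟩, ⟨a₁, ha₁, ha₁c⟩, _⟩ := h
    exact ((reachable_deleteEdges_of_mem (Ne.symm hkW.1) hu (ha ▸ Sym2.mem_mk_left a _)).trans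
      (reachable_of_block_eq k (hac.trans ha₁c.symm))).trans
      (ih hkW.2 (ha₁ ▸ Sym2.mem_mk_left a₁ _) hu')

lemma mem_support_of_touches_both (hT : T.IsAcyclic) {k n m : σ} {c c' : Block σ}
    (hcc' : c ≠ c') (hk : Touches σ k c) (hk' : Touches σ k c') (hn : Touches σ n c)
    (hm : Touches σ m c') (W : (glue σ Tc).Walk m n) : k ∈ W.support := by
  by_contra hkW
  obtain ⟨b, a, hab, rfl⟩ := hk
  have hb : c' = block σ b := (touches_iff hab).mp hk' |>.resolve_left hcc'.symm
  obtain ⟨_, α, hα, hαa⟩ := hn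
  obtain ⟨_, α', hα', rfl⟩ := hm
  have hα'α := reachable_deleteEdges_of_walk W hkW (hα' ▸ Sym2.mem_mk_left α' _)
    (hα ▸ Sym2.mem_mk_left α _)
  exact not_reachable_deleteEdges hT k hab
    (((reachable_of_block_eq k hαa.symm).trans hα'α.symm).trans (reachable_of_block_eq k hb))

lemma forall_touches_or_exit {c : Block σ} {n m : σ} (W : (glue σ Tc).Walk n m)
    (hW : W.IsPath) (hn : Touches σ n c) :
    (∀ g ∈ W.support, Touches σ g c) ∨
      ∃ k h : σ, ∃ c', c' ≠ c ∧ Touches σ k c ∧ Touches σ k c' ∧ Touches σ h c' ∧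
        ∃ W' : (glue σ Tc).Walk h m, k ∉ W'.support := by
  induction W with
  | nil => exact .inl (by simpa using hn)
  | @cons n n₁ m h W ih =>
    rw [Walk.cons_isPath_iff] at hW
    obtain ⟨c', hnc', hn₁c'⟩ := exists_touches_of_adj h
    by_cases hn₁ : Touches σ n₁ c
    · refine (ih hW.1 hn₁).imp (fun hall g hg => ?_) id
      rcases List.mem_cons.mp hg with rfl | hg
      exacts [hn, hall g hg]
    · exact .inr ⟨n, n₁, c', fun h => hn₁ (h ▸ hn₁c'), hn, hnc', hn₁c', W, hW.2⟩

lemma mem_edges_of_forall_touches (hT : T.IsAcyclic) {c : Block σ} (hTc : (Tc c).IsAcyclic)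
    {n m : σ} (hnm : (glue σ Tc).Adj n m) (W : (glue σ Tc).Walk n m)
    (hW : ∀ g ∈ W.support, Touches σ g c) : s(n, m) ∈ W.edges := by
  have hbridge := isAcyclic_iff_forall_adj_isBridge.mp ((localIso Tc hT c).isAcyclic_iff.mp hTc)
    (show ((glue σ Tc).induce {g | Touches σ g c}).Adj ⟨n, hW n W.start_mem_support⟩
      ⟨m, hW m W.end_mem_support⟩ from hnm)
  have hmem := isBridge_iff_forall_walk_mem_edges.mp hbridge (W.induce {g | Touches σ g c} hW)
  rw [← W.map_induce (s := {g | Touches σ g c}) hW]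
  erw [Walk.edges_map]
  exact List.mem_map_of_mem hmem

theorem glue_isAcyclic (hT : T.IsAcyclic)
    (hTc : ∀ c, (exits σ c).Nonempty → (Tc c).IsAcyclic) : (glue σ Tc).IsAcyclic := by
  classical
  -- A path from `n` to `m` either stays among the `σ`-edges touching `c`, where `glue` is a copy
  -- of `Tc c`, or leaves them through some `k` that also touches a block `c'`; it can then only
  -- come back through `k`.
  refine isAcyclic_iff_forall_adj_isBridge.mpr fun n m hnm =>
    isBridge_iff_forall_walk_mem_edges.mpr fun W => ?_
  obtain ⟨c, hn, hm⟩ := exists_touches_of_adj hnm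
  rcases forall_touches_or_exit W.bypass W.bypass_isPath hn with
    hall | ⟨k, h, c', hc', hk, hk', hh, W', hkW'⟩
  · exact W.edges_bypass_subset_edges
      (mem_edges_of_forall_touches hT (hTc c hn.exits_nonempty) hnm _ hall)
  · exact absurd (mem_support_of_touches_both hT hc'.symm hk hk' hm hh W') hkW'

theorem glue_connected (hT : T.IsTree) (hσ : σ.Nonempty)
    (hTc : ∀ c, (exits σ c).Nonempty → (Tc c).Connected) : (glue σ Tc).Connected := by
  have : Nonempty σ := hσ.to_subtype
  refine ⟨fun n m => ?_⟩
  obtain ⟨⟨a, b⟩, hab⟩ := Sym2.mk_surjective (n : Sym2 ι)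
  obtain ⟨⟨a', b'⟩, hab'⟩ := Sym2.mk_surjective (m : Sym2 ι)
  obtain ⟨w⟩ := hT.connected.preconnected a a'
  exact reachable_of_walk id
    (fun c _ _ hp hq => reachable_of_touches hT.isAcyclic (hTc c hp.exits_nonempty) hp hq)
    w (fun n _ => ⟨n, rfl⟩) ⟨b, a, hab.symm, rfl⟩ ⟨b', a', hab'.symm, rfl⟩

theorem glue_preconnected_induce {V : Type*} [DecidableEq V] {E : ι → Finset V}
    (hT : IsJoinTree E T)
    (hTc : ∀ c, (exits σ c).Nonempty → IsJoinTree (fun x : exits σ c => E x) (Tc c)) (v : V) :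
    ((glue σ Tc).induce {n : σ | v ∈ sepOf E n}).Preconnected := by
  rintro ⟨n, hvn⟩ ⟨m, hvm⟩
  obtain ⟨⟨a, b⟩, hab⟩ := Sym2.mk_surjective (n : Sym2 ι)
  obtain ⟨⟨a', b'⟩, hab'⟩ := Sym2.mk_surjective (m : Sym2 ι)
  have hva : v ∈ E a := mem_sepOf_iff.mp hvn a (hab ▸ Sym2.mem_mk_left a b)
  have hva' : v ∈ E a' := mem_sepOf_iff.mp hvm a' (hab' ▸ Sym2.mem_mk_left a' b')
  obtain ⟨w, hw⟩ := exists_walk_of_reachable_induce (hT.2 v ⟨a, hva⟩ ⟨a', hva'⟩)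
  exact reachable_of_walk Subtype.val
    (fun c p q hp hq => reachable_induce_of_touches hT.1.isAcyclic (hT.2 v)
      ((hTc c hp.exits_nonempty).2 v) hp hq p.2 q.2)
    w (fun k hk =>
      ⟨⟨k, mem_sepOf_iff.mpr fun i hi => hw i (w.mem_support_of_mem_edges hk hi)⟩, rfl⟩)
    ⟨b, a, hab.symm, rfl⟩ ⟨b', a', hab'.symm, rfl⟩

theorem isJoinTree_glue {V : Type*} [DecidableEq V] {E : ι → Finset V} (hT : IsJoinTree E T)
    (hσ : σ.Nonempty)
    (hTc : ∀ c, (exits σ c).Nonempty → IsJoinTree (fun x : exits σ c => E x) (Tc c)) :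
    IsJoinTree (fun n : σ => sepOf E n) (glue σ Tc) :=
  ⟨⟨glue_connected hT.1 hσ fun c hc => (hTc c hc).1.connected,
    glue_isAcyclic hT.1.isAcyclic fun c hc => (hTc c hc).1.isAcyclic⟩,
    glue_preconnected_induce hT hTc⟩

end SeparatorHypergraph

open SeparatorHypergraph in
theorem stmt9_general {V ι : Type*} [DecidableEq V]
    (E : ι → Finset V)
    (hbeta : BetaAcyclic E)
    (T : SimpleGraph ι) (hT : IsJoinTree E T) :
    BetaAcyclic fun e : T.edgeSet => sepOf E (e : Sym2 ι) := by
  intro σ hσ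
  have hlocal : ∀ c : Block σ, ∃ Tc : SimpleGraph (exits σ c),
      (exits σ c).Nonempty → IsJoinTree (fun x : exits σ c => E x) Tc := by
    intro c
    by_cases h : (exits σ c).Nonempty
    · exact (hbeta _ h).imp fun _ hJ _ => hJ
    · exact ⟨⊥, fun h' => absurd h' h⟩
  choose Tc hTc using hlocal
  exact ⟨glue σ Tc, isJoinTree_glue hT hσ hTc⟩

/-- If `H` is β-acyclic and `T` is a join tree for `H`, then the
separator hypergraph of `H` with respect to `T` (the family of all separators
`E a ∩ E b` over the edges `{a, b}` of `T`) is β-acyclic, too. -/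
theorem stmt9 {V ι : Type*} [Fintype V] [Fintype ι] [DecidableEq V]
    (E : ι → Finset V)
    (hne : ∀ i, (E i).Nonempty) (hcov : ∀ v, ∃ i, v ∈ E i)
    (hbeta : BetaAcyclic E)
    (T : SimpleGraph ι) (hT : IsJoinTree E T) :
    BetaAcyclic fun e : T.edgeSet => sepOf E (e : Sym2 ι) :=
  stmt9_general E hbeta T hT
end

section
/- Let H = (V, ℰ) be a β-acyclic hypergraph, let T be a join tree for H, and let S be the family of separators of H with respect to T. Then for every subfamily S' ⊆ S, the 2-section graph of the hypergraph formed by S' is chordal. -/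
open SimpleGraph

/-- The 2-section graph of a hypergraph: two distinct vertices are adjacent iff some
hyperedge contains both. -/
def twoSection {V ι : Type*} (E : ι → Finset V) : SimpleGraph V where
  Adj u v := u ≠ v ∧ ∃ i, u ∈ E i ∧ v ∈ E i
  symm := by
    constructor
    rintro u v ⟨h, i, hu, hv⟩
    exact ⟨h.symm, i, hv, hu⟩
  loopless := ⟨fun u h => h.1 rfl⟩
/-- A graph is chordal if every cycle with four or more vertices has a chord, i.e. an
edge of the graph between two vertices of the cycle that is not an edge of the cycle. -/
def Chordal {α : Type*} (G : SimpleGraph α) : Prop :=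
  ∀ (v : α) (c : G.Walk v v), c.IsCycle → 4 ≤ c.length →
    ∃ a b, a ∈ c.support ∧ b ∈ c.support ∧ G.Adj a b ∧ s(a, b) ∉ c.edges

/-!
Let `w₀ ⋯ w_{k-1}` (`k ≥ 4`) be a chordless cycle in the 2-section of the separators. For each `i`
pick a tree edge `ab` whose separator `E a ∩ E b` contains `w_i` and `w_{i+1}`; chordlessness
keeps every other `w_j` out of `E a ∩ E b`. If both `E a` and `E b` met further cycle vertices,
these would lie on opposite sides of `ab` in `T`, yet the rest of the cycle joins them through
hyperedges that never contain a vertex of `E a ∩ E b`, so never cross `ab`. Hence some hyperedge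
`c_i` meets the cycle exactly in `{w_i, w_{i+1}}`. In any join tree of the subfamily `{c_i}`, the
hyperedges containing `w_{i+1}` are exactly `c_i` and `c_{i+1}`, so they are adjacent: the join
tree contains the cycle `c₀ ⋯ c_{k-1}`, contradicting β-acyclicity.
-/

open Fin.CommRing

theorem Fin.forall_of_add_one {n : ℕ} {P : Fin (n + 1) → Prop} {a : Fin (n + 1)} (ha : P a)
    (hP : ∀ j, j + 1 ≠ a → P j → P (j + 1)) (j : Fin (n + 1)) : P j := by
  have hoffset : ∀ t ≤ n, P (a + t) := by
    intro t ht
    induction t with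
    | zero => simpa using ha
    | succ t ih =>
      have hne : a + t + 1 ≠ a := by
        intro h
        have : ((t + 1 : ℕ) : Fin (n + 1)) = 0 := by push_cast; linear_combination h
        rw [Fin.natCast_eq_zero] at this
        exact absurd (Nat.le_of_dvd t.succ_pos this) (by omega)
      simpa [add_assoc] using hP _ hne (ih (by omega))
  simpa using hoffset (j - a).val (by omega)

namespace SimpleGraph

variable {α : Type*} {G : SimpleGraph α}

theorem Walk.IsCycle.isIndContained_cycleGraph {v : α} {p : G.Walk v v} (hp : p.IsCycle)
    (hchordless : ∀ a b, a ∈ p.support → b ∈ p.support → G.Adj a b → s(a, b) ∈ p.edges) :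
    cycleGraph p.length ⊴ G := by
  obtain ⟨m, hm⟩ := Nat.exists_eq_add_of_le' hp.three_le_length
  rw [hm]
  set f : Fin (m + 3) → α := fun i => p.getVert i with hf
  have hinj : Function.Injective f := fun i j h =>
    Fin.ext (hp.getVert_injOn' (show (i : ℕ) ≤ p.length - 1 by omega)
      (show (j : ℕ) ≤ p.length - 1 by omega) h)
  have hsucc : ∀ i : Fin (m + 3), f (i + 1) = p.getVert (i + 1 : ℕ) := by
    intro i
    simp only [hf]
    rw [Fin.val_add_one]
    split_ifs with h
    · simp [h, ← hm]
    · rfl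
  refine ⟨⟨⟨f, hinj⟩, fun {a b} => ?_⟩⟩
  change G.Adj (f a) (f b) ↔ a - b = 1 ∨ b - a = 1
  constructor
  · intro hadj
    obtain ⟨t, ht, heq⟩ := p.mk_mem_edges_iff_exists.1 <|
      hchordless _ _ (p.getVert_mem_support _) (p.getVert_mem_support _) hadj
    obtain ⟨c, rfl⟩ : ∃ c : Fin (m + 3), c.val = t := ⟨⟨t, by omega⟩, rfl⟩
    rw [← hsucc, Sym2.eq_iff] at heq
    rcases heq with ⟨h1, h2⟩ | ⟨h1, h2⟩
    · right
      rw [← hinj h1, ← hinj h2]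
      ring
    · left
      rw [← hinj h1, ← hinj h2]
      ring
  · rintro (h | h)
    · rw [eq_add_of_sub_eq' h, hsucc]
      exact (p.adj_getVert_succ (by omega)).symm
    · rw [eq_add_of_sub_eq' h, hsucc]
      exact p.adj_getVert_succ (by omega)

theorem IsAcyclic.not_injective_of_adj_add_one (hG : G.IsAcyclic) {n : ℕ} (c : Fin (n + 3) → α)
    (hc : ∀ i, G.Adj (c i) (c (i + 1))) : ¬ Function.Injective c := by
  intro hinj
  let f : cycleGraph (n + 3) →g G :=
    ⟨c, fun {a b} h => by
      rcases h with h | h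
      · rw [eq_add_of_sub_eq' h]; exact (hc b).symm
      · rw [eq_add_of_sub_eq' h]; exact hc a⟩
  exact hG.comap f hinj _ cycleGraph.isCycle_cycle

theorem IsAcyclic.not_reachable_deleteEdges_s10 (hG : G.IsAcyclic) {a b : α} (hab : G.Adj a b) :
    ¬ (G.deleteEdges {s(a, b)}).Reachable a b :=
  isBridge_iff.1 (isAcyclic_iff_forall_adj_isBridge.1 hG hab)

theorem Preconnected.reachable_deleteEdges_of_induce {S : Set α} (hS : (G.induce S).Preconnected)
    {x y a b : α} (hx : x ∈ S) (hy : y ∈ S) (hab : ¬ (a ∈ S ∧ b ∈ S)) :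
    (G.deleteEdges {s(a, b)}).Reachable x y := by
  let φ : G.induce S →g G.deleteEdges {s(a, b)} :=
    ⟨Subtype.val, fun {u v} h => by
      refine deleteEdges_adj.2 ⟨h, fun huv => hab ?_⟩
      rcases Sym2.eq_iff.1 (Set.mem_singleton_iff.1 huv) with ⟨rfl, rfl⟩ | ⟨rfl, rfl⟩
      · exact ⟨u.2, v.2⟩
      · exact ⟨v.2, u.2⟩⟩
  exact (hS ⟨x, hx⟩ ⟨y, hy⟩).map φ

theorem Preconnected.adj_of_induce_subset_pair {S : Set α} (hS : (G.induce S).Preconnected)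
    {x y : α} (hxy : x ≠ y) (hx : x ∈ S) (hy : y ∈ S) (hsub : S ⊆ {x, y}) : G.Adj x y := by
  obtain ⟨p⟩ := hS ⟨x, hx⟩ ⟨y, hy⟩
  have hnil : ¬ p.Nil := Walk.not_nil_of_ne (by simpa using hxy)
  have hadj := p.adj_snd hnil
  rcases hsub p.snd.2 with h | h
  · exact absurd (Subtype.ext h).symm hadj.ne
  · rw [← h]
    exact hadj

theorem Embedding.eq_or_eq_add_one_of_adj {n : ℕ} (f : cycleGraph (n + 4) ↪g G) {i j : Fin (n + 4)}
    (h₀ : f j = f i ∨ G.Adj (f j) (f i)) (h₁ : f j = f (i + 1) ∨ G.Adj (f j) (f (i + 1))) :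
    j = i ∨ j = i + 1 := by
  simp only [f.injective.eq_iff, f.map_adj_iff, cycleGraph_adj] at h₀ h₁
  have h3 : (3 : Fin (n + 4)) ≠ 0 := by simp [Fin.ext_iff, Nat.mod_eq_of_lt]
  rcases h₀ with h₀ | h₀ | h₀
  · exact Or.inl h₀
  · exact Or.inr (eq_add_of_sub_eq' h₀)
  rcases h₁ with h₁ | h₁ | h₁
  · exact Or.inr h₁
  · exact absurd (by linear_combination -h₀ - h₁) h3
  · exact absurd (by linear_combination h₁ - h₀) (one_ne_zero (α := Fin (n + 4)))

end SimpleGraph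

theorem chordal_of_forall_not_isIndContained {α : Type*} {G : SimpleGraph α}
    (h : ∀ n, ¬ cycleGraph (n + 4) ⊴ G) : Chordal G := by
  intro v p hp hlen
  by_contra! hchord
  obtain ⟨n, hn⟩ := Nat.exists_eq_add_of_le' hlen
  exact h n (hn ▸ hp.isIndContained_cycleGraph hchord)

section Hypergraph

variable {V ι : Type*} {E : ι → Finset V}

theorem twoSection_eq_or_adj_of_mem {κ : Type*} {F : κ → Finset V} {e : κ} {x y : V}
    (hx : x ∈ F e) (hy : y ∈ F e) : x = y ∨ (twoSection F).Adj x y := by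
  by_cases h : x = y
  · exact Or.inl h
  · exact Or.inr ⟨h, e, hx, hy⟩

theorem exists_mem_sepOf_of_twoSection_adj [DecidableEq V] {s : Set (Sym2 ι)} {x y : V}
    (hxy : (twoSection fun e : s => sepOf E e).Adj x y) :
    ∃ a b, s(a, b) ∈ s ∧ x ∈ E a ∩ E b ∧ y ∈ E a ∩ E b := by
  obtain ⟨-, ⟨e, he⟩, hx, hy⟩ := hxy
  induction e using Sym2.ind with
  | h a b => exact ⟨a, b, he, hx, hy⟩

theorem IsJoinTree.reachable_deleteEdges {T : SimpleGraph ι} (hT : IsJoinTree E T) {x : V}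
    {a b n m : ι} (hx : ¬ (x ∈ E a ∧ x ∈ E b)) (hn : x ∈ E n) (hm : x ∈ E m) :
    (T.deleteEdges {s(a, b)}).Reachable n m :=
  (hT.2 x).reachable_deleteEdges_of_induce hn hm hx

theorem IsJoinTree.reachable_deleteEdges_of_cycle {T : SimpleGraph ι} (hT : IsJoinTree E T)
    {n : ℕ} {w : Fin (n + 1) → V} {g : Fin (n + 1) → ι}
    (hw : ∀ j, w j ∈ E (g j) ∧ w (j + 1) ∈ E (g j)) {a b : ι} {i : Fin (n + 1)}
    (hsep : ∀ j, w j ∈ E a → w j ∈ E b → j = i ∨ j = i + 1) {j : Fin (n + 1)} (hj : j ≠ i) :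
    (T.deleteEdges {s(a, b)}).Reachable (g j) (g (i + 1)) := by
  refine (Fin.forall_of_add_one
    (P := fun j => j = i ∨ (T.deleteEdges {s(a, b)}).Reachable (g j) (g (i + 1)))
    (Or.inr .rfl) (fun j hj₁ hPj => ?_) j).resolve_left hj
  by_cases hji : j + 1 = i
  · exact Or.inl hji
  have hj' : j ≠ i := fun hji' => hj₁ (hji' ▸ rfl)
  refine Or.inr (Reachable.trans ?_ (hPj.resolve_left hj'))
  refine hT.reachable_deleteEdges (fun hab => ?_) (hw (j + 1)).1 (hw j).2
  rcases hsep _ hab.1 hab.2 with hi | hi₁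
  exacts [hji hi, hj₁ hi₁]

theorem IsJoinTree.exists_hyperedge_meeting_hole [DecidableEq V] {T : SimpleGraph ι}
    (hT : IsJoinTree E T) {s : Set (Sym2 ι)} (hs : s ⊆ T.edgeSet) {n : ℕ}
    (f : cycleGraph (n + 4) ↪g twoSection fun e : s => sepOf E e) (i : Fin (n + 4)) :
    ∃ m, ∀ j, f j ∈ E m ↔ j = i ∨ j = i + 1 := by
  have hlink : ∀ j, ∃ a b, s(a, b) ∈ s ∧ f j ∈ E a ∩ E b ∧ f (j + 1) ∈ E a ∩ E b := fun j =>
    exists_mem_sepOf_of_twoSection_adj (f.map_adj_iff.2 (Or.inr (add_sub_cancel_left j 1)))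
  obtain ⟨a, b, hab, hi, hi₁⟩ := hlink i
  choose g _ _ hh hh₁ using hlink
  have hsep : ∀ j, f j ∈ E a → f j ∈ E b → j = i ∨ j = i + 1 := fun j hja hjb => by
    have hj : f j ∈ sepOf E s(a, b) := Finset.mem_inter.2 ⟨hja, hjb⟩
    exact f.eq_or_eq_add_one_of_adj
      (twoSection_eq_or_adj_of_mem (e := ⟨_, hab⟩) hj (show f i ∈ sepOf E s(a, b) from hi))
      (twoSection_eq_or_adj_of_mem (e := ⟨_, hab⟩) hj (show f (i + 1) ∈ sepOf E s(a, b) from hi₁))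
  have hreach : ∀ j ≠ i, (T.deleteEdges {s(a, b)}).Reachable (g j) (g (i + 1)) := fun j hj =>
    hT.reachable_deleteEdges_of_cycle
      (fun j => ⟨(Finset.mem_inter.1 (hh j)).1, (Finset.mem_inter.1 (hh₁ j)).1⟩) hsep hj
  suffices (∀ j, f j ∈ E a → j = i ∨ j = i + 1) ∨ (∀ j, f j ∈ E b → j = i ∨ j = i + 1) by
    rw [Finset.mem_inter] at hi hi₁
    rcases this with ha | hb
    · exact ⟨a, fun j => ⟨ha j, by rintro (rfl | rfl); exacts [hi.1, hi₁.1]⟩⟩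
    · exact ⟨b, fun j => ⟨hb j, by rintro (rfl | rfl); exacts [hi.2, hi₁.2]⟩⟩
  by_contra! hne
  obtain ⟨⟨p, hpa, hp⟩, ⟨q, hqb, hq⟩⟩ := hne
  have hpside : (T.deleteEdges {s(a, b)}).Reachable a (g p) :=
    hT.reachable_deleteEdges (fun hpab => (hsep p hpab.1 hpab.2).elim hp.1 hp.2) hpa
      (Finset.mem_inter.1 (hh p)).1
  have hqside : (T.deleteEdges {s(a, b)}).Reachable b (g q) :=
    hT.reachable_deleteEdges (fun hqab => (hsep q hqab.1 hqab.2).elim hq.1 hq.2) hqb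
      (Finset.mem_inter.1 (hh q)).1
  exact hT.1.isAcyclic.not_reachable_deleteEdges_s10 (hs hab)
    (hpside.trans ((hreach p hp.1).trans ((hreach q hq.1).symm.trans hqside.symm)))

theorem not_isAcyclicHG_of_cycle {n : ℕ} (c : Fin (n + 3) → ι) (hc : Function.Surjective c)
    (x : Fin (n + 3) → V) (hx : ∀ l j, x j ∈ E (c l) ↔ j = l ∨ j = l + 1) :
    ¬ IsAcyclicHG E := by
  have hinj : Function.Injective c := by
    intro l r hlr
    have h₁ := (hx r (l + 1)).1 (hlr ▸ (hx l (l + 1)).2 (Or.inr rfl))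
    have h₂ := (hx l (r + 1)).1 (hlr ▸ (hx r (r + 1)).2 (Or.inr rfl))
    rcases h₁ with h₁ | h₁
    · rcases h₂ with h₂ | h₂
      · have h2 : (2 : Fin (n + 3)) ≠ 0 := by simp [Fin.ext_iff, Nat.mod_eq_of_lt]
        exact absurd (by linear_combination h₁ + h₂) h2
      · exact (add_right_cancel h₂).symm
    · exact add_right_cancel h₁
  rintro ⟨T, hT, hconn⟩
  refine hT.isAcyclic.not_injective_of_adj_add_one c (fun l => ?_) hinj
  refine (hconn (x (l + 1))).adj_of_induce_subset_pair (hinj.ne (left_ne_add.2 one_ne_zero))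
    ((hx l _).2 (Or.inr rfl)) ((hx (l + 1) _).2 (Or.inl rfl)) ?_
  intro m (hm : x (l + 1) ∈ E m)
  obtain ⟨r, rfl⟩ := hc m
  rcases (hx r _).1 hm with h | h
  · exact Or.inr (congrArg c h.symm)
  · exact Or.inl (congrArg c (add_right_cancel h).symm)

end Hypergraph

theorem stmt10_general {V ι : Type*} [DecidableEq V]
    (E : ι → Finset V)
    (hbeta : BetaAcyclic E)
    (T : SimpleGraph ι) (hT : IsJoinTree E T) :
    ∀ s : Set (Sym2 ι), s ⊆ T.edgeSet →
      Chordal (twoSection fun e : s => sepOf E (e : Sym2 ι)) := by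
  intro s hs
  refine chordal_of_forall_not_isIndContained fun n ⟨f⟩ => ?_
  choose c hc using hT.exists_hyperedge_meeting_hole hs f
  exact not_isAcyclicHG_of_cycle (Set.rangeFactorization c) Set.rangeFactorization_surjective f hc
    (hbeta _ (Set.range_nonempty c))

/-- If `H` is β-acyclic, `T` is a join tree for `H`, and `S` is the
family of separators of `H` with respect to `T`, then for every subfamily `S' ⊆ S` the
2-section graph of the hypergraph formed by `S'` is chordal. -/
theorem stmt10 {V ι : Type*} [Fintype V] [Fintype ι] [DecidableEq V]
    (E : ι → Finset V)
    (hne : ∀ i, (E i).Nonempty) (hcov : ∀ v, ∃ i, v ∈ E i)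
    (hbeta : BetaAcyclic E)
    (T : SimpleGraph ι) (hT : IsJoinTree E T) :
    ∀ s : Set (Sym2 ι), s ⊆ T.edgeSet →
      Chordal (twoSection fun e : s => sepOf E (e : Sym2 ι)) :=
  stmt10_general E hbeta T hT
end

section
/- Let H = (V, ℰ) be a hypergraph and let B(H) be its Bachman diagram with node set 𝒳. Then every node 𝔛 ∈ 𝒳 such that no hyperedge E ∈ ℰ satisfies E = 𝔛 has in-degree at least 2 in B(H); that is, there exist at least two distinct nodes 𝔜 ∈ 𝒳 with an edge from 𝔜 to 𝔛. -/
open SimpleGraph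

/-- The node set of the Bachman diagram of a hypergraph: all nonempty sets obtainable as
the intersection of the hyperedges of a nonempty subfamily. -/
def BachmanNodes {V ι : Type*} [DecidableEq V] (E : ι → Finset V) : Set (Finset V) :=
  {X | X.Nonempty ∧ ∃ (s : Finset ι) (hs : s.Nonempty), X = s.inf' hs E}

/-- The edge relation of the Bachman diagram: there is an edge from `X` to `Y` iff
`X ⊋ Y` and no node `Z` satisfies `X ⊋ Z ⊋ Y`. -/
def BachmanEdge {V ι : Type*} [DecidableEq V] (E : ι → Finset V) (X Y : Finset V) : Prop :=
  X ∈ BachmanNodes E ∧ Y ∈ BachmanNodes E ∧ Y ⊂ X ∧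
    ¬∃ Z ∈ BachmanNodes E, Z ⊂ X ∧ Y ⊂ Z

/-!
Write `X = E j₁ ∩ ⋯ ∩ E jₖ`. Since no hyperedge equals `X`, each `E jₘ` is a node strictly
above `X`, and a minimal node between `X` and `E jₘ` is an in-neighbour of `X` contained in
`E jₘ`. Take such an in-neighbour `Y₁`. It cannot lie in every `E jₘ`, for then it would lie
in `X`; so some `E j` misses a point of `Y₁`, and an in-neighbour `Y₂ ⊆ E j` differs from `Y₁`.
-/

namespace BachmanNodes

variable {V ι : Type*} [DecidableEq V] {E : ι → Finset V}

theorem hyperedge_mem (i : ι) (hi : (E i).Nonempty) : E i ∈ BachmanNodes E :=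
  ⟨hi, {i}, Finset.singleton_nonempty i, (Finset.inf'_singleton ..).symm⟩

theorem exists_bachmanEdge_subset_of_ssubset {X W : Finset V} (hX : X ∈ BachmanNodes E)
    (hW : W ∈ BachmanNodes E) (hXW : X ⊂ W) :
    ∃ Y ⊆ W, BachmanEdge E Y X := by
  obtain ⟨Y, ⟨hY, hXY, hYW⟩, hmin⟩ := wellFounded_lt.has_min
    {Z | Z ∈ BachmanNodes E ∧ X ⊂ Z ∧ Z ⊆ W} ⟨W, hW, hXW, subset_rfl⟩
  refine ⟨Y, hYW, hY, hX, hXY, ?_⟩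
  rintro ⟨Z, hZ, hZY, hXZ⟩
  exact hmin Z ⟨hZ, hXZ, hZY.subset.trans hYW⟩ hZY

end BachmanNodes

open BachmanNodes in
theorem stmt15_general {V ι : Type*} [DecidableEq V]
    (E : ι → Finset V)
    (X : Finset V) (hX : X ∈ BachmanNodes E) (hnotEdge : ∀ i, E i ≠ X) :
    ∃ Y₁ Y₂ : Finset V, Y₁ ≠ Y₂ ∧ BachmanEdge E Y₁ X ∧ BachmanEdge E Y₂ X := by
  obtain ⟨hXne, s, hs, rfl⟩ := id hX
  have hsub : ∀ i ∈ s, s.inf' hs E ⊂ E i := fun i hi =>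
    (Finset.inf'_le E hi).lt_of_ne fun h => hnotEdge i h.symm
  have hmem : ∀ i ∈ s, E i ∈ BachmanNodes E := fun i hi =>
    hyperedge_mem i (hXne.mono (hsub i hi).subset)
  obtain ⟨i₀, hi₀⟩ := id hs
  obtain ⟨Y₁, -, hY₁⟩ := exists_bachmanEdge_subset_of_ssubset hX (hmem i₀ hi₀) (hsub i₀ hi₀)
  obtain ⟨i₁, hi₁, hY₁i₁⟩ : ∃ i ∈ s, ¬Y₁ ⊆ E i := by
    by_contra! h
    exact hY₁.2.2.1.not_subset ((Finset.le_inf'_iff hs E).2 h)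
  obtain ⟨Y₂, hY₂i₁, hY₂⟩ := exists_bachmanEdge_subset_of_ssubset hX (hmem i₁ hi₁) (hsub i₁ hi₁)
  exact ⟨Y₁, Y₂, fun h => hY₁i₁ (h ▸ hY₂i₁), hY₁, hY₂⟩

/-- Every node `X` of the Bachman diagram of a hypergraph `H` such
that no hyperedge of `H` equals `X` has in-degree at least `2`: there are two distinct
nodes `Y₁ ≠ Y₂` with edges from `Y₁` to `X` and from `Y₂` to `X`. -/
theorem stmt15 {V ι : Type*} [Fintype V] [Fintype ι] [DecidableEq V]
    (E : ι → Finset V)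
    (hne : ∀ i, (E i).Nonempty) (hcov : ∀ v, ∃ i, v ∈ E i)
    (X : Finset V) (hX : X ∈ BachmanNodes E) (hnotEdge : ∀ i, E i ≠ X) :
    ∃ Y₁ Y₂ : Finset V, Y₁ ≠ Y₂ ∧ BachmanEdge E Y₁ X ∧ BachmanEdge E Y₂ X :=
  stmt15_general E X hX hnotEdge
end

section
/- Let H = (V, ℰ) be an interval hypergraph with hyperedge order σ = ⟨E_1, …, E_m⟩ (so that v ∈ E_i ∩ E_j implies v ∈ E_k for all i ≤ k ≤ j). For each vertex v, let φ(v) = min{ i : v ∈ E_i }; for each i with 2 ≤ i ≤ m, let S_i = E_{i-1} ∩ E_i and φ(S_i) = max_{v ∈ S_i} φ(v). Then for all i, j with 2 ≤ i ≤ m and 1 ≤ j < i: E_i ⊆ E_j if and only if |E_i| = |S_i| and j ≥ φ(S_i). -/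
open SimpleGraph


/-- Let `E_0, …, E_{m-1}` be an interval hypergraph, ordered so that
`v ∈ E i ∩ E j` implies `v ∈ E k` for all `i ≤ k ≤ j`. For a vertex `v`, `φ v` is the
first (smallest-index) hyperedge containing `v`; for an index `i` with predecessor `ip`
(`ip + 1 = i`), the separator is `S_i = E ip ∩ E i` and `φS i = max_{v ∈ S_i} φ v`.
Then for all such `i` and all `j < i`: `E i ⊆ E j` iff `|E i| = |S_i|` and `φS i ≤ j`. -/
theorem stmt17 {V : Type*} [Fintype V] [DecidableEq V] {m : ℕ}
    (E : Fin m → Finset V)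
    (hne : ∀ i, (E i).Nonempty)
    (hInt : ∀ (v : V) (i j k : Fin m), i ≤ k → k ≤ j → v ∈ E i → v ∈ E j → v ∈ E k)
    (φ : V → Fin m)
    (hφ : ∀ v, v ∈ E (φ v) ∧ ∀ i, v ∈ E i → φ v ≤ i)
    (φS : Fin m → Fin m) :
    ∀ i ip j : Fin m, (ip : ℕ) + 1 = (i : ℕ) → j < i →
      (∀ v ∈ E ip ∩ E i, φ v ≤ φS i) →
      (∃ v ∈ E ip ∩ E i, φS i = φ v) →
      (E i ⊆ E j ↔ (E i).card = (E ip ∩ E i).card ∧ φS i ≤ j) := by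
  intro i ip j hip hji hub ⟨w, hw, hφw⟩
  have hjip : j ≤ ip := by
    have : (j:ℕ) < (i:ℕ) := hji
    omega
  have hipi : ip ≤ i := by
    have : (ip:ℕ) ≤ (i:ℕ) := by omega
    exact this
  constructor
  · intro hsub
    constructor
    · have h1 : E i ⊆ E ip ∩ E i := by
        intro v hv
        exact Finset.mem_inter.2 ⟨hInt v j i ip hjip hipi (hsub hv) hv, hv⟩
      exact le_antisymm (Finset.card_le_card h1) (Finset.card_le_card (Finset.inter_subset_right))
    · have hwi : w ∈ E i := (Finset.mem_inter.1 hw).2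
      have := (hφ w).2 j (hsub hwi)
      rw [hφw]; exact this
  · rintro ⟨hcard, hle⟩
    have heq : E ip ∩ E i = E i :=
      Finset.eq_of_subset_of_card_le Finset.inter_subset_right (le_of_eq hcard)
    intro v hv
    have hvS : v ∈ E ip ∩ E i := heq.symm ▸ hv
    have hφv : φ v ≤ j := le_trans (hub v hvS) hle
    exact hInt v (φ v) i j hφv (le_of_lt hji) (hφ v).1 hv
end

section
/- Let H = (V, ℰ) be an acyclic hypergraph. Then H has a unique join tree if and only if the union join graph of H is a tree. -/
open SimpleGraph

/-- The union join graph of a hypergraph: two hyperedges are adjacent iff some join tree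
of the hypergraph contains the edge between them. -/
def unionJoinGraph {V ι : Type*} (E : ι → Finset V) : SimpleGraph ι where
  Adj i j := ∃ T : SimpleGraph ι, IsJoinTree E T ∧ T.Adj i j
  symm := by
    constructor
    rintro i j ⟨T, hT, h⟩
    exact ⟨T, hT, h.symm⟩
  loopless := by
    constructor
    rintro i ⟨T, _, h⟩
    exact T.irrefl h

/-! Every join tree is a spanning subgraph of the union join graph, and a connected spanning
subgraph of an acyclic graph is the whole graph. So if the union join graph is a tree, every
join tree equals it; conversely, a unique join tree is the union join graph. -/

namespace SimpleGraph

/-- A connected acyclic graph is maximal acyclic. -/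
lemma IsAcyclic.eq_of_le_of_connected {ι : Type*} {T U : SimpleGraph ι} (hU : U.IsAcyclic)
    (hle : T ≤ U) (hT : T.Connected) : T = U :=
  haveI := hT.nonempty
  le_antisymm hle <| (maximal_isAcyclic_iff_isTree.mpr ⟨hT, hU.anti hle⟩).le_of_ge hU hle

end SimpleGraph

section JoinTree

variable {V ι : Type*} {E : ι → Finset V} {T : SimpleGraph ι}

lemma IsJoinTree.le_unionJoinGraph (hT : IsJoinTree E T) : T ≤ unionJoinGraph E :=
  fun _ _ hadj => ⟨T, hT, hadj⟩

lemma unionJoinGraph_eq_of_forall_eq (hT : IsJoinTree E T)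
    (huniq : ∀ T' : SimpleGraph ι, IsJoinTree E T' → T' = T) : unionJoinGraph E = T :=
  le_antisymm (fun _ _ ⟨T', hT', hadj⟩ => huniq T' hT' ▸ hadj) hT.le_unionJoinGraph

lemma IsJoinTree.eq_unionJoinGraph (hacyc : (unionJoinGraph E).IsAcyclic)
    (hT : IsJoinTree E T) : T = unionJoinGraph E :=
  hacyc.eq_of_le_of_connected hT.le_unionJoinGraph hT.1.1

end JoinTree

theorem stmt19_general {V ι : Type*}
    (E : ι → Finset V)
    (hacyclic : IsAcyclicHG E) :
    (∃! T : SimpleGraph ι, IsJoinTree E T) ↔ (unionJoinGraph E).IsTree := by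
  constructor
  · rintro ⟨T, hT, huniq⟩
    rw [unionJoinGraph_eq_of_forall_eq hT huniq]
    exact hT.1
  · intro htree
    obtain ⟨T, hT⟩ := hacyclic
    refine ⟨T, hT, fun T' hT' => ?_⟩
    rw [hT'.eq_unionJoinGraph htree.2, hT.eq_unionJoinGraph htree.2]

/-- An acyclic hypergraph `H` has a unique join tree iff its union
join graph is a tree. -/
theorem stmt19 {V ι : Type*} [Fintype V] [Fintype ι] [DecidableEq V]
    (E : ι → Finset V)
    (hne : ∀ i, (E i).Nonempty) (hcov : ∀ v, ∃ i, v ∈ E i)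
    (hacyclic : IsAcyclicHG E) :
    (∃! T : SimpleGraph ι, IsJoinTree E T) ↔ (unionJoinGraph E).IsTree :=
  stmt19_general E hacyclic
end
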